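/- arXiv:2412.19230 — 5 statements merged into one kernel-verified Lean document; each statement's English description precedes it below -/
import Mathlib

section
/- Every semistrong matching of a graph G is a uniquely restricted matching of G, i.e., M is the unique perfect matching of the subgraph G_M induced by the vertices covered by M. -/
namespace SSE

open SimpleGraph

variable {V : Type*} {W : Type*}

/-- The set of vertices covered by a set of edges. -/
def cov (M : Set (Sym2 V)) : Set V := {v | ∃ e ∈ M, v ∈ e}

/-- `M` is a matching of `G`: a set of pairwise disjoint edges of `G`. -/
def IsMatchingSet (G : SimpleGraph V) (M : Set (Sym2 V)) : Prop :=
  M ⊆ G.edgeSet ∧ ∀ e ∈ M, ∀ f ∈ M, e ≠ f → ∀ v : V, v ∈ e → v ∉ f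

/-- `v` is a pendant vertex (degree 1) of the subgraph `G_M` of `G` induced by
the vertices covered by `M`. -/
def PendantIn (G : SimpleGraph V) (M : Set (Sym2 V)) (v : V) : Prop :=
  v ∈ cov M ∧ ∃! u, u ∈ cov M ∧ G.Adj v u

/-- `M` is an induced (strong) matching of `G`: every vertex of `G_M` is pendant in `G_M`. -/
def IsInducedMatching (G : SimpleGraph V) (M : Set (Sym2 V)) : Prop :=
  IsMatchingSet G M ∧ ∀ v ∈ cov M, PendantIn G M v

/-- `M` is a semistrong matching of `G`: every edge of `M` is a pendant edge of `G_M`. -/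
def IsSemistrongMatching (G : SimpleGraph V) (M : Set (Sym2 V)) : Prop :=
  IsMatchingSet G M ∧ ∀ e ∈ M, ∃ v, v ∈ e ∧ PendantIn G M v

/-- `N` is a perfect matching of the subgraph of `G` induced by `S`. -/
def IsPerfectMatchingOn (G : SimpleGraph V) (S : Set V) (N : Set (Sym2 V)) : Prop :=
  IsMatchingSet G N ∧ (∀ e ∈ N, ∀ v : V, v ∈ e → v ∈ S) ∧ cov N = S

/-- `M` is a uniquely restricted matching of `G`: it is the unique perfect matching
of the subgraph induced by the vertices it covers. -/
def IsUniquelyRestrictedMatching (G : SimpleGraph V) (M : Set (Sym2 V)) : Prop :=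
  IsMatchingSet G M ∧ ∀ N : Set (Sym2 V), IsPerfectMatchingOn G (cov M) N → N = M

/-- An edge coloring of `G` with colors `< k` each of whose color classes satisfies `P`. -/
def IsPColoring (G : SimpleGraph V) (P : SimpleGraph V → Set (Sym2 V) → Prop)
    (c : Sym2 V → ℕ) (k : ℕ) : Prop :=
  (∀ e ∈ G.edgeSet, c e < k) ∧ ∀ i : ℕ, P G {e | e ∈ G.edgeSet ∧ c e = i}

/-- The least number of colors in an edge coloring of `G` whose color classes satisfy `P`. -/
noncomputable def pIndex (G : SimpleGraph V)
    (P : SimpleGraph V → Set (Sym2 V) → Prop) : ℕ :=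
  sInf {k | ∃ c, IsPColoring G P c k}

/-- The chromatic index. -/
noncomputable def chromIndex (G : SimpleGraph V) : ℕ := pIndex G IsMatchingSet

/-- The uniquely restricted chromatic index. -/
noncomputable def urIndex (G : SimpleGraph V) : ℕ := pIndex G IsUniquelyRestrictedMatching

/-- The semistrong chromatic index. -/
noncomputable def ssIndex (G : SimpleGraph V) : ℕ := pIndex G IsSemistrongMatching

/-- The strong chromatic index. -/
noncomputable def strongIndex (G : SimpleGraph V) : ℕ := pIndex G IsInducedMatching

/-- The degree of a vertex. -/
noncomputable def natDeg (G : SimpleGraph V) (v : V) : ℕ := (G.neighborSet v).ncard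

/-- The maximum average degree of `G` is (strictly) less than `q`:
every nonempty (induced) subgraph has average degree `< q`. -/
def MadLT (G : SimpleGraph V) (q : ℚ) : Prop :=
  ∀ s : Set V, s.Finite → s.Nonempty →
    (2 * ({e ∈ G.edgeSet | ∀ v ∈ e, v ∈ s}.ncard : ℚ)) < q * s.ncard

/-- `K` is a minor of `G` (branch-set formulation). -/
def HasMinor (G : SimpleGraph V) (K : SimpleGraph W) : Prop :=
  ∃ B : W → Set V, (∀ w, (B w).Nonempty) ∧
    (∀ w, (G.induce (B w)).Connected) ∧
    (Pairwise fun w w' => Disjoint (B w) (B w')) ∧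
    (∀ w w', K.Adj w w' → ∃ u ∈ B w, ∃ v ∈ B w', G.Adj u v)

/-- `G` is planar (by Wagner's theorem: no `K₅` minor and no `K₃,₃` minor). -/
def IsPlanar (G : SimpleGraph V) : Prop :=
  ¬ HasMinor G (completeGraph (Fin 5)) ∧
  ¬ HasMinor G (completeBipartiteGraph (Fin 3) (Fin 3))

/-- The join `C_Δ ∨ I_2` of a cycle on `Δ` vertices with an independent set of 2 vertices. -/
def joinCI (n : ℕ) : SimpleGraph (Fin n ⊕ Fin 2) :=
  SimpleGraph.fromRel (fun x y =>
    match x, y with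
    | Sum.inl a, Sum.inl b => (SimpleGraph.cycleGraph n).Adj a b
    | Sum.inl _, Sum.inr _ => True
    | _, _ => False)

/-- `G` contains an `M`-alternating cycle: a cycle whose edges alternate between
edges in `M` and edges not in `M` (cyclically). -/
def HasAlternatingCycle (G : SimpleGraph V) (M : Set (Sym2 V)) : Prop :=
  ∃ (v : V) (c : G.Walk v v), c.IsCycle ∧
    List.Chain' (fun e f => ¬(e ∈ M ↔ f ∈ M)) c.edges ∧
    ∀ e ∈ c.edges.head?, ∀ f ∈ c.edges.getLast?, ¬(e ∈ M ↔ f ∈ M)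

/-- Edges `e` and `f` lie together on a cycle of length 4 in `G`. -/
def OnCommonC4 (G : SimpleGraph V) (e f : Sym2 V) : Prop :=
  ∃ (v : V) (c : G.Walk v v), c.IsCycle ∧ c.length = 4 ∧ e ∈ c.edges ∧ f ∈ c.edges


/-- Every semistrong matching of a graph `G` is a uniquely restricted matching of `G`. -/
theorem semistrong_matching_is_uniquely_restricted {V : Type*} [Fintype V]
    (G : SimpleGraph V) (M : Set (Sym2 V)) (h : IsSemistrongMatching G M) :
    IsUniquelyRestrictedMatching G M := by
  obtain ⟨hM, hss⟩ := h
  refine ⟨hM, ?_⟩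
  rintro N ⟨⟨hNE, hNdisj⟩, hNsub, hNcov⟩
  have hMN : M ⊆ N := by
    intro e he
    obtain ⟨v, hve, _, ⟨u, ⟨hucov, hvu⟩, huniq⟩⟩ := hss e he
    set w := Sym2.Mem.other hve with hw
    have hew : e = s(v, w) := (Sym2.other_spec hve).symm
    have hwcov : w ∈ cov M := ⟨e, he, Sym2.other_mem hve⟩
    have hadjw : G.Adj v w := by
      have := hM.1 he
      rwa [hew, SimpleGraph.mem_edgeSet] at this
    have hvcovN : v ∈ cov N := by rw [hNcov]; exact ⟨e, he, hve⟩
    obtain ⟨f, hf, hvf⟩ := hvcovN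
    set u' := Sym2.Mem.other hvf with hu'
    have hfu' : f = s(v, u') := (Sym2.other_spec hvf).symm
    have hu'cov : u' ∈ cov M := by rw [← hNcov]; exact ⟨f, hf, Sym2.other_mem hvf⟩
    have hadju' : G.Adj v u' := by
      have := hNE hf
      rwa [hfu', SimpleGraph.mem_edgeSet] at this
    have h1 : u' = u := huniq u' ⟨hu'cov, hadju'⟩
    have h2 : w = u := huniq w ⟨hwcov, hadjw⟩
    have : f = e := by rw [hfu', hew, h1, h2]
    rwa [← this]
  have hNM : N ⊆ M := by
    intro f hf
    induction f with
    | h a b =>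
      have hacov : a ∈ cov M := by
        rw [← hNcov]; exact ⟨s(a, b), hf, Sym2.mem_mk_left a b⟩
      obtain ⟨e, he, hae⟩ := hacov
      have heN : e ∈ N := hMN he
      by_contra hfM
      have hne : e ≠ s(a, b) := by rintro rfl; exact hfM he
      exact hNdisj e heN s(a, b) hf hne a hae (Sym2.mem_mk_left a b)
  exact Set.Subset.antisymm hNM hMN

end SSE
end

section
/- A matching M of a graph G is uniquely restricted (i.e., M is the unique perfect matching of the subgraph induced by the vertices covered by M) if and only if G contains no M-alternating cycle, that is, no cycle whose edges alternate between edges in M and edges not in M. -/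
namespace SSE

open SimpleGraph

variable {V : Type*} {W : Type*}

/-!
If `C` is an `M`-alternating cycle, then `M ∆ C` is a second perfect matching of the subgraph
induced by the vertices of `M`. Conversely, if `N ≠ M` is one, then every vertex meets `M ∆ N` in
no edge or in exactly two, one from each matching; so the nonempty edge set `M ∆ N` is a union of
cycles, each of them `M`-alternating.
-/

open scoped symmDiff

section CyclicChain

variable {α : Type*} {R : α → α → Prop}

def CyclicChain (R : α → α → Prop) (l : List α) : Prop :=
  l.IsChain R ∧ ∀ x ∈ l.getLast?, ∀ y ∈ l.head?, R x y

theorem CyclicChain.append_comm {l₁ l₂ : List α} (h : CyclicChain R (l₁ ++ l₂)) :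
    CyclicChain R (l₂ ++ l₁) := by
  rcases eq_or_ne l₁ [] with rfl | h₁
  · simpa using h
  rcases eq_or_ne l₂ [] with rfl | h₂
  · simpa using h
  simp only [CyclicChain, List.isChain_append, List.getLast?_append, List.head?_append,
    List.getLast?_eq_some_getLast h₁, List.getLast?_eq_some_getLast h₂,
    List.head?_eq_some_head h₁, List.head?_eq_some_head h₂, Option.or_some, Option.mem_def,
    Option.some.injEq, forall_eq'] at h ⊢
  tauto

theorem CyclicChain.of_isRotated {l l' : List α} (h : CyclicChain R l) (hr : l ~r l') :
    CyclicChain R l' := by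
  obtain ⟨n, rfl⟩ := hr
  rw [List.rotate_eq_drop_append_take_mod]
  rw [← List.take_append_drop (n % l.length) l] at h
  exact h.append_comm

theorem CyclicChain.rel_getLast_head {l : List α} (h : CyclicChain R l) (hl : l ≠ []) :
    R (l.getLast hl) (l.head hl) :=
  h.2 _ (List.getLast?_eq_some_getLast hl) _ (List.head?_eq_some_head hl)

end CyclicChain

variable {G : SimpleGraph V}

theorem eq_or_eq_of_mem_edges_of_isCycle {u : V} {c : G.Walk u u} (hc : c.IsCycle)
    {e : Sym2 V} (he : e ∈ c.edges) (hu : u ∈ e) : e = s(u, c.snd) ∨ e = s(c.penultimate, u) := by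
  obtain ⟨x, rfl⟩ := Sym2.mem_iff_exists.mp hu
  have hx : x ∈ c.toSubgraph.neighborSet u := Walk.adj_toSubgraph_iff_mem_edges.mpr he
  rw [hc.neighborSet_toSubgraph_endpoint] at hx
  rcases hx with rfl | rfl
  · exact Or.inl rfl
  · exact Or.inr Sym2.eq_swap

theorem cyclicChain_edges_of_isCycle {u : V} {c : G.Walk u u} (hc : c.IsCycle)
    {R : Sym2 V → Sym2 V → Prop}
    (hR : ∀ e ∈ c.edges, ∀ f ∈ c.edges, e ≠ f → ∀ x, x ∈ e → x ∈ f → R e f) :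
    CyclicChain R c.edges := by
  have hnodup := hc.edges_nodup
  refine ⟨List.isChain_iff_getElem.mpr fun i hi => ?_, fun x hx y hy => ?_⟩
  · refine hR _ (List.getElem_mem _) _ (List.getElem_mem _) ?_ (c.getVert (i + 1)) ?_ ?_
    · exact fun h => by simpa using (hnodup.getElem_inj_iff).mp h
    · rw [Walk.getElem_edges]; exact Sym2.mem_mk_right _ _
    · rw [Walk.getElem_edges]; exact Sym2.mem_mk_left _ _
  · have hne : c.edges ≠ [] := Walk.edges_eq_nil.not.mpr hc.not_nil
    rw [List.getLast?_eq_some_getLast hne, Option.mem_some_iff,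
      Walk.getLast_edges_eq_mk_penultimate_end] at hx
    rw [List.head?_eq_some_head hne, Option.mem_some_iff, Walk.head_edges_eq_mk_start_snd] at hy
    subst hx hy
    refine hR _ (Walk.mk_penultimate_end_mem_edges hc.not_nil) _
      (Walk.mk_start_snd_mem_edges hc.not_nil) ?_ u (Sym2.mem_mk_right _ _) (Sym2.mem_mk_left _ _)
    grind [Sym2.eq_iff, Walk.IsCycle.snd_ne_penultimate]

variable {M N C : Set (Sym2 V)}

theorem IsMatchingSet.eq_of_mem_of_mem (hM : IsMatchingSet G M) {e f : Sym2 V} {v : V}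
    (he : e ∈ M) (hf : f ∈ M) (hve : v ∈ e) (hvf : v ∈ f) : e = f := by
  by_contra hne
  exact hM.2 e he f hf hne v hve hvf

def Alternates (M : Set (Sym2 V)) (e f : Sym2 V) : Prop := ¬(e ∈ M ↔ f ∈ M)

def IsAlternatingAt (M C : Set (Sym2 V)) (v : V) : Prop :=
  ∃ e ∈ C, ∃ f ∈ C, e ∈ M ∧ f ∉ M ∧ v ∈ e ∧ v ∈ f ∧ ∀ g ∈ C, v ∈ g → g = e ∨ g = f

theorem IsAlternatingAt.alternates {v : V} (h : IsAlternatingAt M C v) {e f : Sym2 V}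
    (he : e ∈ C) (hf : f ∈ C) (hef : e ≠ f) (hve : v ∈ e) (hvf : v ∈ f) : Alternates M e f := by
  obtain ⟨a, -, b, -, haM, hbM, -, -, huniq⟩ := h
  rcases huniq e he hve with rfl | rfl <;> rcases huniq f hf hvf with rfl | rfl <;>
    simp_all [Alternates]

/-- For finite `C`: `C` is the edge set of a vertex-disjoint union of `M`-alternating cycles. -/
def IsAlternatingCycles (M C : Set (Sym2 V)) : Prop := ∀ v ∈ cov C, IsAlternatingAt M C v

namespace IsAlternatingCycles

theorem cov_subset (h : IsAlternatingCycles M C) : cov C ⊆ cov M := by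
  intro v hv
  obtain ⟨e, -, -, -, heM, -, hve, -⟩ := h v hv
  exact ⟨e, heM, hve⟩

theorem isMatchingSet_symmDiff (hM : IsMatchingSet G M) (hC : C ⊆ G.edgeSet)
    (h : IsAlternatingCycles M C) : IsMatchingSet G (M ∆ C) := by
  refine ⟨Set.symmDiff_subset_union.trans (Set.union_subset hM.1 hC), ?_⟩
  intro e he f hf hef v hve hvf
  rcases he with ⟨heM, heC⟩ | ⟨heC, heM⟩ <;> rcases hf with ⟨hfM, hfC⟩ | ⟨hfC, hfM⟩
  · exact hef (hM.eq_of_mem_of_mem heM hfM hve hvf)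
  · obtain ⟨g, hgC, -, -, hgM, -, hvg, -⟩ := h v ⟨f, hfC, hvf⟩
    exact heC (hM.eq_of_mem_of_mem heM hgM hve hvg ▸ hgC)
  · obtain ⟨g, hgC, -, -, hgM, -, hvg, -⟩ := h v ⟨e, heC, hve⟩
    exact hfC (hM.eq_of_mem_of_mem hfM hgM hvf hvg ▸ hgC)
  · exact (h v ⟨e, heC, hve⟩).alternates heC hfC hef hve hvf (iff_of_false heM hfM)

theorem isPerfectMatchingOn_symmDiff (hM : IsMatchingSet G M) (hC : C ⊆ G.edgeSet)
    (h : IsAlternatingCycles M C) : IsPerfectMatchingOn G (cov M) (M ∆ C) := by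
  have hcov : ∀ e ∈ M ∆ C, ∀ v ∈ e, v ∈ cov M := by
    rintro e (⟨heM, -⟩ | ⟨heC, -⟩) v hve
    exacts [⟨e, heM, hve⟩, h.cov_subset ⟨e, heC, hve⟩]
  refine ⟨h.isMatchingSet_symmDiff hM hC, hcov, ?_⟩
  refine subset_antisymm (fun v ⟨e, he, hve⟩ => hcov e he v hve) ?_
  rintro v ⟨e, heM, hve⟩
  by_cases heC : e ∈ C
  · obtain ⟨-, -, f, hfC, -, hfM, -, hvf, -⟩ := h v ⟨e, heC, hve⟩
    exact ⟨f, Or.inr ⟨hfC, hfM⟩, hvf⟩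
  · exact ⟨e, Or.inl ⟨heM, heC⟩, hve⟩

theorem isCycles_fromEdgeSet (hC : C ⊆ G.edgeSet) (h : IsAlternatingCycles M C) :
    (fromEdgeSet C).IsCycles := by
  rintro v ⟨w, hw⟩
  rw [mem_neighborSet, fromEdgeSet_adj] at hw
  obtain ⟨e, he, f, hf, heM, hfM, hve, hvf, huniq⟩ := h v ⟨_, hw.1, Sym2.mem_mk_left _ _⟩
  obtain ⟨a, rfl⟩ := Sym2.mem_iff_exists.mp hve
  obtain ⟨b, rfl⟩ := Sym2.mem_iff_exists.mp hvf
  have hab : a ≠ b := by rintro rfl; exact hfM heM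
  convert Set.ncard_pair hab
  ext x
  simp only [mem_neighborSet, fromEdgeSet_adj, Set.mem_insert_iff, Set.mem_singleton_iff]
  constructor
  · rintro ⟨hx, -⟩
    simpa only [Sym2.congr_right] using huniq _ hx (Sym2.mem_mk_left _ _)
  · rintro (rfl | rfl)
    exacts [⟨he, G.ne_of_adj (hC he)⟩, ⟨hf, G.ne_of_adj (hC hf)⟩]

theorem exists_isCycle [Finite V] (hC : C ⊆ G.edgeSet) (h : IsAlternatingCycles M C)
    (hne : C.Nonempty) :
    ∃ (u : V) (c : G.Walk u u), c.IsCycle ∧ CyclicChain (Alternates M) c.edges := by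
  obtain ⟨⟨v, w⟩, hvw⟩ := hne
  have hle : fromEdgeSet C ≤ G := fun x y hxy => hC hxy.1
  obtain ⟨p, hp, -⟩ :=
    (h.isCycles_fromEdgeSet hC).exists_cycle_toSubgraph_verts_eq_connectedComponentSupp
      (c := (fromEdgeSet C).connectedComponentMk v) rfl ⟨w, hvw, G.ne_of_adj (hC hvw)⟩
  have hpC : ∀ g ∈ p.edges, g ∈ C := fun g hg =>
    (edgeSet_fromEdgeSet C ▸ p.edges_subset_edgeSet hg).1
  refine ⟨v, p.mapLe hle, hp.mapLe hle, ?_⟩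
  rw [Walk.edges_mapLe_eq_edges]
  exact cyclicChain_edges_of_isCycle hp fun e he f hf hef x hxe hxf =>
    (h x ⟨e, hpC e he, hxe⟩).alternates (hpC e he) (hpC f hf) hef hxe hxf

end IsAlternatingCycles

theorem isAlternatingCycles_symmDiff (hM : IsMatchingSet G M)
    (hN : IsPerfectMatchingOn G (cov M) N) : IsAlternatingCycles M (M ∆ N) := by
  rintro v ⟨g, hg, hvg⟩
  have hvM : v ∈ cov M := by
    rcases hg with ⟨hgM, -⟩ | ⟨hgN, -⟩
    exacts [⟨g, hgM, hvg⟩, hN.2.2 ▸ ⟨g, hgN, hvg⟩]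
  obtain ⟨b, hbN, hvb⟩ : v ∈ cov N := hN.2.2.symm ▸ hvM
  obtain ⟨a, haM, hva⟩ := hvM
  have haN : a ∉ N := by
    intro haN
    have hab := hN.1.eq_of_mem_of_mem haN hbN hva hvb
    rcases hg with ⟨hgM, hgN⟩ | ⟨hgN, hgM⟩
    · exact hgN (hM.eq_of_mem_of_mem hgM haM hvg hva ▸ haN)
    · exact hgM ((hN.1.eq_of_mem_of_mem hgN hbN hvg hvb).trans hab.symm ▸ haM)
  have hbM : b ∉ M := fun hbM => haN (hM.eq_of_mem_of_mem hbM haM hvb hva ▸ hbN)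
  refine ⟨a, Or.inl ⟨haM, haN⟩, b, Or.inr ⟨hbN, hbM⟩, haM, hbM, hva, hvb, ?_⟩
  rintro g' (⟨hg'M, -⟩ | ⟨hg'N, -⟩) hvg'
  exacts [Or.inl (hM.eq_of_mem_of_mem hg'M haM hvg' hva),
    Or.inr (hN.1.eq_of_mem_of_mem hg'N hbN hvg' hvb)]

theorem isAlternatingCycles_edges_of_isCycle {u : V} {c : G.Walk u u} (hc : c.IsCycle)
    (halt : CyclicChain (Alternates M) c.edges) : IsAlternatingCycles M {e | e ∈ c.edges} := by
  classical
  rintro w ⟨g, hg, hwg⟩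
  obtain ⟨x, rfl⟩ := Sym2.mem_iff_exists.mp hwg
  have hw : w ∈ c.support := c.fst_mem_support_of_mem_edges hg
  have hc' := hc.rotate hw
  have hrot := c.rotate_edges w hw
  have halt' := (halt.of_isRotated hrot.symm).rel_getLast_head
    (Walk.edges_eq_nil.not.mpr hc'.not_nil)
  rw [Walk.getLast_edges_eq_mk_penultimate_end, Walk.head_edges_eq_mk_start_snd] at halt'
  have hfirst := hrot.mem_iff.mp (Walk.mk_start_snd_mem_edges hc'.not_nil)
  have hlast := hrot.mem_iff.mp (Walk.mk_penultimate_end_mem_edges hc'.not_nil)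
  have huniq : ∀ g ∈ {e | e ∈ c.edges}, w ∈ g →
      g = s(w, (c.rotate w hw).snd) ∨ g = s((c.rotate w hw).penultimate, w) :=
    fun g hg hwg => eq_or_eq_of_mem_edges_of_isCycle hc' (hrot.mem_iff.mpr hg) hwg
  by_cases hM : s(w, (c.rotate w hw).snd) ∈ M
  · exact ⟨_, hfirst, _, hlast, hM, fun h => halt' (iff_of_true h hM),
      Sym2.mem_mk_left _ _, Sym2.mem_mk_right _ _, huniq⟩
  · exact ⟨_, hlast, _, hfirst, not_not.mp fun h => halt' (iff_of_false h hM), hM,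
      Sym2.mem_mk_right _ _, Sym2.mem_mk_left _ _, fun g hg hwg => (huniq g hg hwg).symm⟩

theorem hasAlternatingCycle_iff : HasAlternatingCycle G M ↔
    ∃ (u : V) (c : G.Walk u u), c.IsCycle ∧ CyclicChain (Alternates M) c.edges := by
  exact exists_congr fun u => exists_congr fun c => and_congr_right fun _ =>
    and_congr Iff.rfl ⟨fun h x hx y hy hxy => h y hy x hx hxy.symm,
      fun h e he f hf hef => h f hf e he hef.symm⟩

/-- A matching `M` of `G` is uniquely restricted iff `G` has no `M`-alternating cycle. -/
theorem uniquely_restricted_iff_no_alternating_cycle {V : Type*} [Fintype V]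
    (G : SimpleGraph V) (M : Set (Sym2 V)) (hM : IsMatchingSet G M) :
    IsUniquelyRestrictedMatching G M ↔ ¬ HasAlternatingCycle G M := by
  rw [hasAlternatingCycle_iff]
  constructor
  · rintro ⟨-, hUR⟩ ⟨u, c, hc, halt⟩
    have hC : {e | e ∈ c.edges} ⊆ G.edgeSet := fun e he => c.edges_subset_edgeSet he
    have hCM := hUR _
      ((isAlternatingCycles_edges_of_isCycle hc halt).isPerfectMatchingOn_symmDiff hM hC)
    exact Set.eq_empty_iff_forall_notMem.mp (symmDiff_eq_left.mp hCM) _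
      (c.mk_start_snd_mem_edges hc.not_nil)
  · refine fun hno => ⟨hM, fun N hN => ?_⟩
    by_contra hNM
    have hD := isAlternatingCycles_symmDiff hM hN
    exact hno (hD.exists_isCycle (Set.symmDiff_subset_union.trans (Set.union_subset hM.1 hN.1.1))
      (Set.nonempty_iff_ne_empty.mpr (symmDiff_eq_bot.not.mpr (Ne.symm hNM))))

end SSE
end

section
/- In the join G = C_Δ ∨ I_2 of a cycle on Δ ≥ 4 vertices with an independent set of two vertices, any two edges incident to a vertex of I_2 are either adjacent or lie on a common 4-cycle; consequently, in every semistrong edge coloring of G, the 2Δ edges joining C_Δ to I_2 receive pairwise distinct colors. -/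
namespace SSE

open SimpleGraph

variable {V : Type*} {W : Type*}

lemma adj_inl_inr {n : ℕ} (i : Fin n) (b : Fin 2) :
    (joinCI n).Adj (Sum.inl i) (Sum.inr b) := by
  simp [joinCI, SimpleGraph.fromRel_adj]

lemma inr_edge {n : ℕ} {e : Sym2 (Fin n ⊕ Fin 2)} (he : e ∈ (joinCI n).edgeSet)
    {b : Fin 2} (hb : Sum.inr b ∈ e) :
    ∃ i : Fin n, e = s(Sum.inr b, Sum.inl i) := by
  induction e using Sym2.ind with
  | _ x y =>
    rw [SimpleGraph.mem_edgeSet] at he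
    rw [Sym2.mem_iff] at hb
    rcases hb with rfl | rfl
    · rcases y with j | b'
      · exact ⟨j, rfl⟩
      · exfalso; rw [joinCI, SimpleGraph.fromRel_adj] at he; simp at he
    · rcases x with j | b'
      · exact ⟨j, Sym2.eq_swap⟩
      · exfalso; rw [joinCI, SimpleGraph.fromRel_adj] at he; simp at he

lemma c4 {n : ℕ} {b b' : Fin 2} {i j : Fin n} (hb : b ≠ b') (hij : i ≠ j) :
    OnCommonC4 (joinCI n) s(Sum.inr b, Sum.inl i) s(Sum.inr b', Sum.inl j) := by
  refine ⟨Sum.inr b,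
    SimpleGraph.Walk.cons ((adj_inl_inr i b).symm)
      (SimpleGraph.Walk.cons (adj_inl_inr i b')
        (SimpleGraph.Walk.cons ((adj_inl_inr j b').symm)
          (SimpleGraph.Walk.cons (adj_inl_inr j b) SimpleGraph.Walk.nil))), ?_, rfl, ?_, ?_⟩
  · rw [SimpleGraph.Walk.isCycle_def, SimpleGraph.Walk.isTrail_def]
    refine ⟨?_, by simp, ?_⟩
    · simp [SimpleGraph.Walk.edges, Sym2.eq, Sym2.rel_iff', hij, hij.symm, hb, hb.symm]
    · simp [hij, hij.symm, hb, hb.symm]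
  · simp [SimpleGraph.Walk.edges]
  · simp [SimpleGraph.Walk.edges, Sym2.eq, Sym2.rel_iff']

lemma key_struct {n : ℕ} {e f : Sym2 (Fin n ⊕ Fin 2)}
    (he : e ∈ (joinCI n).edgeSet) (hf : f ∈ (joinCI n).edgeSet)
    (hbe : ∃ b : Fin 2, Sum.inr b ∈ e) (hbf : ∃ b : Fin 2, Sum.inr b ∈ f)
    (hdisj : ¬ ∃ v, v ∈ e ∧ v ∈ f) :
    ∃ b b' i j, e = s(Sum.inr b, Sum.inl i) ∧ f = s(Sum.inr b', Sum.inl j) ∧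
      b ≠ b' ∧ i ≠ j := by
  obtain ⟨b, hb⟩ := hbe
  obtain ⟨b', hb'⟩ := hbf
  obtain ⟨i, rfl⟩ := inr_edge he hb
  obtain ⟨j, rfl⟩ := inr_edge hf hb'
  refine ⟨b, b', i, j, rfl, rfl, ?_, ?_⟩
  · rintro rfl; exact hdisj ⟨Sum.inr b, by simp, by simp⟩
  · rintro rfl; exact hdisj ⟨Sum.inl i, by simp, by simp⟩

/-- In `C_Δ ∨ I_2` (`Δ ≥ 4`), any two edges incident to a vertex of `I_2` are adjacent or
lie on a common 4-cycle; consequently, in every semistrong edge coloring the `2Δ` edges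
joining the cycle to `I_2` receive pairwise distinct colors. -/
theorem joinCI_inr_edges_distinct_colors (Δ : ℕ) (hΔ : 4 ≤ Δ) :
    (∀ e ∈ (joinCI Δ).edgeSet, ∀ f ∈ (joinCI Δ).edgeSet,
      (∃ b : Fin 2, (Sum.inr b : Fin Δ ⊕ Fin 2) ∈ e) →
      (∃ b : Fin 2, (Sum.inr b : Fin Δ ⊕ Fin 2) ∈ f) →
      e ≠ f → (∃ v, v ∈ e ∧ v ∈ f) ∨ OnCommonC4 (joinCI Δ) e f) ∧
    (∀ c : Sym2 (Fin Δ ⊕ Fin 2) → ℕ,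
      (∀ i : ℕ, IsSemistrongMatching (joinCI Δ) {e | e ∈ (joinCI Δ).edgeSet ∧ c e = i}) →
      ∀ e ∈ (joinCI Δ).edgeSet, ∀ f ∈ (joinCI Δ).edgeSet,
        (∃ b : Fin 2, (Sum.inr b : Fin Δ ⊕ Fin 2) ∈ e) →
        (∃ b : Fin 2, (Sum.inr b : Fin Δ ⊕ Fin 2) ∈ f) →
        e ≠ f → c e ≠ c f) := by
  constructor
  · intro e he f hf hbe hbf hne
    by_cases hshare : ∃ v, v ∈ e ∧ v ∈ f
    · exact Or.inl hshare
    · obtain ⟨b, b', i, j, rfl, rfl, hbb, hij⟩ := key_struct he hf hbe hbf hshare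
      exact Or.inr (c4 hbb hij)
  · intro c hc e he f hf hbe hbf hne hcef
    set M : Set (Sym2 (Fin Δ ⊕ Fin 2)) :=
      {e | e ∈ (joinCI Δ).edgeSet ∧ c e = c f} with hMdef
    have hM := hc (c f)
    have heM : e ∈ M := ⟨he, hcef⟩
    have hfM : f ∈ M := ⟨hf, rfl⟩
    have hdisj : ¬ ∃ v, v ∈ e ∧ v ∈ f := by
      rintro ⟨v, hv1, hv2⟩
      exact hM.1.2 e heM f hfM hne v hv1 hv2
    obtain ⟨b, b', i, j, rfl, rfl, hbb, hij⟩ := key_struct he hf hbe hbf hdisj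
    obtain ⟨v, hv, hcov, hEU⟩ := hM.2 _ heM
    obtain ⟨u, hu, huniq⟩ := hEU
    have covmem : ∀ (w : Fin Δ ⊕ Fin 2) (g : Sym2 (Fin Δ ⊕ Fin 2)),
        g ∈ M → w ∈ g → w ∈ cov M := fun w g hg hw => ⟨g, hg, hw⟩
    rw [Sym2.mem_iff] at hv
    rcases hv with rfl | rfl
    · have h1 := huniq (Sum.inl i)
        ⟨covmem _ _ heM (by simp), (adj_inl_inr i b).symm⟩
      have h2 := huniq (Sum.inl j)
        ⟨covmem _ _ hfM (by simp), (adj_inl_inr j b).symm⟩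
      exact hij (by simpa using h1.trans h2.symm)
    · have h1 := huniq (Sum.inr b)
        ⟨covmem _ _ heM (by simp), adj_inl_inr i b⟩
      have h2 := huniq (Sum.inr b')
        ⟨covmem _ _ hfM (by simp), adj_inl_inr i b'⟩
      exact hbb (by simpa using h1.trans h2.symm)


end SSE
end

section
/- The semistrong chromatic index of the cycle C_n satisfies χ'_ss(C_4) = χ'_ss(C_7) = 4, and χ'_ss(C_n) = 3 for every n ≥ 3 with n ∉ {4,7}. -/
namespace SSE

open SimpleGraph

variable {V : Type*} {W : Type*}

/-!
Index the edges of `C_n` by `a ↦ s(a, a + 1)`. A covered vertex of a cycle is pendant iff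
exactly one of its two neighbours is covered, so an edge set is a semistrong matching iff its
index set has no two consecutive members and no three members `a, a + 2, a + 4`. Two colors
never suffice, since they would alternate. In `C_4` and `C_7` such index sets have at most one
resp. two members, so four colors are needed. Conversely every `n ≥ 5` other than `7` is
`3a + 5b`, and the cyclic word `(01201)^b (012)^a` is a semistrong coloring with three colors:
both blocks continue cyclically as `0120`, so every window of five letters already occurs in
`(01201)^∞` or `(012)^∞`.
-/

open SimpleGraph Finset

theorem pIndex_eq_of_minimal {G : SimpleGraph V} {P : SimpleGraph V → Set (Sym2 V) → Prop}
    {k : ℕ} (hk : ∃ c, IsPColoring G P c k) (hmin : ∀ j c, IsPColoring G P c j → k ≤ j) :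
    pIndex G P = k :=
  le_antisymm (Nat.sInf_le hk) (le_csInf ⟨k, hk⟩ fun j ⟨c, hc⟩ => hmin j c hc)

theorem existsUnique_mem_and_eq_or_eq_iff {α : Type*} {T : Set α} {x y : α} (hxy : x ≠ y) :
    (∃! u, u ∈ T ∧ (u = x ∨ u = y)) ↔ (x ∈ T ↔ y ∉ T) := by
  constructor
  · rintro ⟨u, ⟨hu, hux⟩, huniq⟩
    refine ⟨fun hx hy => hxy ?_, fun hy => ?_⟩
    · exact (huniq x ⟨hx, Or.inl rfl⟩).trans (huniq y ⟨hy, Or.inr rfl⟩).symm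
    · rcases hux with rfl | rfl
      exacts [hu, absurd hu hy]
  · intro h
    by_cases hx : x ∈ T
    · refine ⟨x, ⟨hx, Or.inl rfl⟩, ?_⟩
      rintro u ⟨hu, rfl | rfl⟩
      exacts [rfl, absurd hu (h.mp hx)]
    · refine ⟨y, ⟨not_not.mp (mt h.mpr hx), Or.inr rfl⟩, ?_⟩
      rintro u ⟨hu, rfl | rfl⟩
      exacts [absurd hu hx, rfl]

section IndexSets

open Fin.CommRing

variable {n : ℕ} [NeZero n]

def cycleEdge (a : Fin n) : Sym2 (Fin n) := s(a, a + 1)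

/-- Semistrong matchings of `C_n`, encoded as index sets `S` of the edges `cycleEdge '' S`. -/
def IsSemistrongIndexSet (S : Set (Fin n)) : Prop :=
  ∀ a ∈ S, a + 1 ∉ S ∧ (a + 2 ∈ S → a + 4 ∉ S)

def IsSemistrongCycleColoring (w : Fin n → ℕ) (k : ℕ) : Prop :=
  (∀ a, w a < k) ∧ ∀ i, IsSemistrongIndexSet {a | w a = i}

theorem isSemistrongCycleColoring_iff {w : Fin n → ℕ} {k : ℕ} :
    IsSemistrongCycleColoring w k ↔
      ∀ a, w a < k ∧ w (a + 1) ≠ w a ∧ (w (a + 2) = w a → w (a + 4) ≠ w a) := by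
  simp only [IsSemistrongCycleColoring, IsSemistrongIndexSet, Set.mem_ofPred_eq]
  constructor
  · rintro ⟨hk, hS⟩ a
    exact ⟨hk a, hS (w a) a rfl⟩
  · intro h
    refine ⟨fun a => (h a).1, ?_⟩
    rintro i a rfl
    exact (h a).2

theorem IsSemistrongCycleColoring.three_le {w : Fin n → ℕ} {k : ℕ}
    (hw : IsSemistrongCycleColoring w k) : 3 ≤ k := by
  rw [isSemistrongCycleColoring_iff] at hw
  by_contra! hk
  -- with two colors the colors alternate, so `w 0 = w 2 = w 4`
  have alternate : ∀ a, w (a + 2) = w a := by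
    intro a
    have h₁ := hw a
    have h₂ := hw (a + 1)
    have h₃ := (hw (a + 2)).1
    rw [show a + 1 + 1 = a + 2 by ring] at h₂
    omega
  have four_eq : (0 : Fin n) + 4 = 0 + 2 + 2 := by ring
  exact (hw 0).2.2 (alternate 0) (by rw [four_eq, alternate, alternate])

theorem IsSemistrongCycleColoring.card_le_mul {w : Fin n → ℕ} {k m : ℕ}
    (hw : IsSemistrongCycleColoring w k)
    (hS : ∀ S : Finset (Fin n), IsSemistrongIndexSet (S : Set (Fin n)) → #S ≤ m) :
    n ≤ m * k := by
  have := card_le_mul_card_image_of_maps_to (s := univ) (t := range k)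
    (fun a _ => mem_range.mpr (hw.1 a)) m fun i _ => hS _ (by simpa using hw.2 i)
  simpa using this

theorem card_le_one_of_isSemistrongIndexSet_fin_four (S : Finset (Fin 4))
    (hS : IsSemistrongIndexSet (S : Set (Fin 4))) : #S ≤ 1 := by
  unfold IsSemistrongIndexSet at hS
  simp only [mem_coe] at hS
  revert S
  decide

theorem card_le_two_of_isSemistrongIndexSet_fin_seven (S : Finset (Fin 7))
    (hS : IsSemistrongIndexSet (S : Set (Fin 7))) : #S ≤ 2 := by
  unfold IsSemistrongIndexSet at hS
  simp only [mem_coe] at hS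
  revert S
  set_option maxRecDepth 10000 in decide

end IndexSets

section CycleGraph

open Fin.CommRing

variable {n : ℕ}

theorem cycleGraph_adj_iff_eq_add_one {u v : Fin (n + 3)} :
    (cycleGraph (n + 3)).Adj u v ↔ v = u + 1 ∨ u = v + 1 := by
  rw [cycleGraph_adj (n := n + 1), sub_eq_iff_eq_add, sub_eq_iff_eq_add, add_comm 1 v,
    add_comm 1 u, or_comm]

theorem cycleEdge_injective : Function.Injective (cycleEdge (n := n + 3)) := by
  intro a b h
  rcases Sym2.eq_iff.mp h with ⟨hab, -⟩ | ⟨hab, hba⟩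
  · exact hab
  · have : b + 2 = b := calc
      b + 2 = b + 1 + 1 := by ring
      _ = b := by rw [← hab, hba]
    exact absurd (add_eq_left.mp this) two_ne_zero

theorem edgeSet_cycleGraph : (cycleGraph (n + 3)).edgeSet = Set.range cycleEdge := by
  ext e
  induction e using Sym2.ind with
  | _ u v =>
  simp only [mem_edgeSet, cycleGraph_adj_iff_eq_add_one, Set.mem_range, cycleEdge]
  constructor
  · rintro (rfl | rfl)
    · exact ⟨u, rfl⟩
    · exact ⟨v, Sym2.eq_swap⟩
  · rintro ⟨a, h⟩
    rcases Sym2.eq_iff.mp h with ⟨rfl, rfl⟩ | ⟨rfl, rfl⟩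
    exacts [Or.inl rfl, Or.inr rfl]

section Cover

variable {S : Set (Fin (n + 3))}

theorem mem_cov_image_cycleEdge {v : Fin (n + 3)} :
    v ∈ cov (cycleEdge '' S) ↔ v ∈ S ∨ v - 1 ∈ S := by
  simp only [cov, Set.mem_ofPred_eq, Set.exists_mem_image, cycleEdge, Sym2.mem_iff]
  constructor
  · rintro ⟨a, ha, rfl | rfl⟩
    · exact Or.inl ha
    · exact Or.inr (by simpa using ha)
  · rintro (hv | hv)
    · exact ⟨v, hv, Or.inl rfl⟩
    · exact ⟨v - 1, hv, Or.inr (by ring)⟩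

theorem mem_cov_image_cycleEdge_of_mem {a : Fin (n + 3)} (ha : a ∈ S) :
    a ∈ cov (cycleEdge '' S) :=
  ⟨cycleEdge a, ⟨a, ha, rfl⟩, Sym2.mem_mk_left _ _⟩

theorem add_one_mem_cov_image_cycleEdge_of_mem {a : Fin (n + 3)} (ha : a ∈ S) :
    a + 1 ∈ cov (cycleEdge '' S) :=
  ⟨cycleEdge a, ⟨a, ha, rfl⟩, Sym2.mem_mk_right _ _⟩

end Cover

theorem isMatchingSet_image_cycleEdge_iff {S : Set (Fin (n + 3))} :
    IsMatchingSet (cycleGraph (n + 3)) (cycleEdge '' S) ↔ ∀ a ∈ S, a + 1 ∉ S := by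
  constructor
  · rintro ⟨-, hdisj⟩ a ha ha₁
    refine hdisj _ ⟨a, ha, rfl⟩ _ ⟨a + 1, ha₁, rfl⟩ (cycleEdge_injective.ne ?_) (a + 1)
      (Sym2.mem_mk_right _ _) (Sym2.mem_mk_left _ _)
    exact fun h => one_ne_zero (add_eq_left.mp h.symm)
  · intro h
    refine ⟨?_, ?_⟩
    · rintro _ ⟨a, -, rfl⟩
      rw [edgeSet_cycleGraph]
      exact ⟨a, rfl⟩
    · rintro _ ⟨a, ha, rfl⟩ _ ⟨b, hb, rfl⟩ hne v hva hvb
      simp only [cycleEdge, Sym2.mem_iff] at hva hvb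
      rcases hva with rfl | rfl <;> rcases hvb with hvb | hvb
      · exact hne (by rw [hvb])
      · exact h b hb (hvb ▸ ha)
      · exact h a ha (hvb ▸ hb)
      · exact hne (by rw [add_right_cancel hvb])

theorem pendantIn_cycleGraph_iff {M : Set (Sym2 (Fin (n + 3)))} {v : Fin (n + 3)} :
    PendantIn (cycleGraph (n + 3)) M v ↔
      v ∈ cov M ∧ (v + 1 ∈ cov M ↔ v - 1 ∉ cov M) := by
  have hne : v + 1 ≠ v - 1 := by
    rw [ne_eq, ← sub_eq_zero, show v + 1 - (v - 1) = 2 by ring]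
    exact two_ne_zero
  have hadj : ∀ u, (cycleGraph (n + 3)).Adj v u ↔ u = v + 1 ∨ u = v - 1 := fun u => by
    rw [cycleGraph_adj_iff_eq_add_one, eq_sub_iff_add_eq, eq_comm (a := v)]
  simp only [PendantIn, hadj, existsUnique_mem_and_eq_or_eq_iff hne]

theorem isSemistrongMatching_image_cycleEdge_iff {S : Set (Fin (n + 3))} :
    IsSemistrongMatching (cycleGraph (n + 3)) (cycleEdge '' S) ↔ IsSemistrongIndexSet S := by
  constructor
  · rintro ⟨hmatch, hpend⟩ a ha
    refine ⟨isMatchingSet_image_cycleEdge_iff.mp hmatch a ha, fun ha₂ ha₄ => ?_⟩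
    obtain ⟨v, hv, hvpend⟩ := hpend _ ⟨a + 2, ha₂, rfl⟩
    rw [pendantIn_cycleGraph_iff] at hvpend
    -- both neighbours of either endpoint of the edge `a + 2` are covered
    rcases Sym2.mem_iff.mp hv with rfl | rfl
    · refine hvpend.2.mp (add_one_mem_cov_image_cycleEdge_of_mem ha₂) ?_
      rw [show a + 2 - 1 = a + 1 by ring]
      exact add_one_mem_cov_image_cycleEdge_of_mem ha
    · refine hvpend.2.mp ?_ ?_
      · rw [show a + 2 + 1 + 1 = a + 4 by ring]
        exact mem_cov_image_cycleEdge_of_mem ha₄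
      · rw [show a + 2 + 1 - 1 = a + 2 by ring]
        exact mem_cov_image_cycleEdge_of_mem ha₂
  · intro hS
    refine ⟨isMatchingSet_image_cycleEdge_iff.mpr fun a ha => (hS a ha).1, ?_⟩
    rintro _ ⟨a, ha, rfl⟩
    by_cases hprev : a - 2 ∈ S
    · have hnext : a + 2 ∉ S := by
        have := (hS (a - 2) hprev).2
        rw [show a - 2 + 2 = a by ring, show a - 2 + 4 = a + 2 by ring] at this
        exact this ha
      refine ⟨a + 1, Sym2.mem_mk_right _ _, pendantIn_cycleGraph_iff.mpr
        ⟨add_one_mem_cov_image_cycleEdge_of_mem ha, ?_⟩⟩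
      simp only [mem_cov_image_cycleEdge, add_sub_cancel_right]
      rw [show a + 1 + 1 = a + 2 by ring]
      simp [hnext, ha, (hS a ha).1]
    · refine ⟨a, Sym2.mem_mk_left _ _, pendantIn_cycleGraph_iff.mpr
        ⟨mem_cov_image_cycleEdge_of_mem ha, ?_⟩⟩
      have hpred : a - 1 ∉ S := fun h => (hS (a - 1) h).1 (by rwa [sub_add_cancel])
      simp only [mem_cov_image_cycleEdge, add_sub_cancel_right]
      rw [show a - 1 - 1 = a - 2 by ring]
      simp [hprev, ha, hpred]

theorem setOf_mem_edgeSet_cycleGraph_and_eq (c : Sym2 (Fin (n + 3)) → ℕ) (i : ℕ) :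
    {e | e ∈ (cycleGraph (n + 3)).edgeSet ∧ c e = i} =
      cycleEdge '' {a | c (cycleEdge a) = i} := by
  ext e
  rw [edgeSet_cycleGraph]
  constructor
  · rintro ⟨⟨a, rfl⟩, h⟩
    exact ⟨a, h, rfl⟩
  · rintro ⟨a, h, rfl⟩
    exact ⟨⟨a, rfl⟩, h⟩

theorem isPColoring_cycleGraph_iff {c : Sym2 (Fin (n + 3)) → ℕ} {k : ℕ} :
    IsPColoring (cycleGraph (n + 3)) IsSemistrongMatching c k ↔
      IsSemistrongCycleColoring (c ∘ cycleEdge) k := by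
  simp only [IsPColoring, setOf_mem_edgeSet_cycleGraph_and_eq,
    isSemistrongMatching_image_cycleEdge_iff]
  rw [edgeSet_cycleGraph, Set.forall_mem_range]
  rfl

theorem exists_isPColoring_cycleGraph_iff {k : ℕ} :
    (∃ c, IsPColoring (cycleGraph (n + 3)) IsSemistrongMatching c k) ↔
      ∃ w : Fin (n + 3) → ℕ, IsSemistrongCycleColoring w k := by
  simp_rw [isPColoring_cycleGraph_iff]
  refine ⟨fun ⟨_, hc⟩ => ⟨_, hc⟩, fun ⟨w, hw⟩ => ?_⟩
  refine ⟨Function.extend cycleEdge w 0, ?_⟩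
  rwa [Function.extend_comp cycleEdge_injective]

theorem ssIndex_cycleGraph_eq {k : ℕ}
    (hk : ∃ w : Fin (n + 3) → ℕ, IsSemistrongCycleColoring w k)
    (hmin : ∀ j (w : Fin (n + 3) → ℕ), IsSemistrongCycleColoring w j → k ≤ j) :
    ssIndex (cycleGraph (n + 3)) = k :=
  pIndex_eq_of_minimal (exists_isPColoring_cycleGraph_iff.mpr hk) fun j _ hc =>
    hmin j _ (isPColoring_cycleGraph_iff.mp hc)

end CycleGraph

theorem add_mod_eq_ite_of_lt {v j n : ℕ} (hv : v < n) (hj : j ≤ n) :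
    (v + j) % n = if v + j < n then v + j else v + j - n := by
  split_ifs with h
  · exact Nat.mod_eq_of_lt h
  · rw [Nat.mod_eq_sub_mod (by omega), Nat.mod_eq_of_lt (by omega)]

/-- The cyclic word `(01201)^b (012)^a` of length `3 * a + 5 * b`. -/
def blockWord (b v : ℕ) : ℕ := if v < 5 * b then v % 5 % 3 else (v - 5 * b) % 3

theorem blockWord_window {a b v : ℕ} (hn : 5 ≤ 3 * a + 5 * b) (hv : v < 3 * a + 5 * b) :
    blockWord b ((v + 1) % (3 * a + 5 * b)) ≠ blockWord b v ∧
      (blockWord b ((v + 2) % (3 * a + 5 * b)) = blockWord b v →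
        blockWord b ((v + 4) % (3 * a + 5 * b)) ≠ blockWord b v) := by
  rw [add_mod_eq_ite_of_lt hv (by omega), add_mod_eq_ite_of_lt hv (by omega),
    add_mod_eq_ite_of_lt hv (by omega)]
  unfold blockWord
  refine ⟨?_, fun h => ?_⟩ <;> split_ifs at * <;> omega

theorem isSemistrongCycleColoring_blockWord {n a b : ℕ} [NeZero n] (hab : n = 3 * a + 5 * b)
    (hn : 5 ≤ n) : IsSemistrongCycleColoring (fun x : Fin n => blockWord b x) 3 := by
  subst hab
  refine isSemistrongCycleColoring_iff.mpr fun x => ⟨?_, ?_⟩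
  · unfold blockWord
    split_ifs <;> omega
  · simpa [Fin.val_add] using blockWord_window hn x.isLt

theorem exists_eq_three_mul_add_five_mul {n : ℕ} (h5 : 5 ≤ n) (h7 : n ≠ 7) :
    ∃ a b, n = 3 * a + 5 * b := by
  rcases (by omega : n % 3 = 0 ∨ n % 3 = 1 ∨ n % 3 = 2) with h | h | h
  · exact ⟨n / 3, 0, by omega⟩
  · exact ⟨(n - 10) / 3, 2, by omega⟩
  · exact ⟨(n - 5) / 3, 1, by omega⟩

/-- `χ'_ss(C_4) = χ'_ss(C_7) = 4` and `χ'_ss(C_n) = 3` for every other `n ≥ 3`. -/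
theorem ssIndex_cycles :
    ssIndex (SimpleGraph.cycleGraph 4) = 4 ∧
    ssIndex (SimpleGraph.cycleGraph 7) = 4 ∧
    ∀ n : ℕ, 3 ≤ n → n ≠ 4 → n ≠ 7 → ssIndex (SimpleGraph.cycleGraph n) = 3 := by
  refine ⟨?_, ?_, fun n h3 h4 h7 => ?_⟩
  · refine ssIndex_cycleGraph_eq (n := 1)
      ⟨Fin.val, isSemistrongCycleColoring_iff.mpr (by decide)⟩ fun _ _ hw => ?_
    simpa using hw.card_le_mul card_le_one_of_isSemistrongIndexSet_fin_four
  · refine ssIndex_cycleGraph_eq (n := 4)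
      ⟨![0, 1, 0, 2, 1, 2, 3], isSemistrongCycleColoring_iff.mpr (by decide)⟩ fun _ _ hw => ?_
    have := hw.card_le_mul card_le_two_of_isSemistrongIndexSet_fin_seven
    omega
  · obtain ⟨m, rfl⟩ : ∃ m, n = m + 3 := ⟨n - 3, by omega⟩
    refine ssIndex_cycleGraph_eq ?_ fun _ _ hw => hw.three_le
    rcases (by omega : m = 0 ∨ 2 ≤ m) with rfl | hm
    · exact ⟨Fin.val, isSemistrongCycleColoring_iff.mpr (by decide)⟩
    · obtain ⟨a, b, hab⟩ := exists_eq_three_mul_add_five_mul (n := m + 3) (by omega) h7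
      exact ⟨_, isSemistrongCycleColoring_blockWord hab (by omega)⟩

end SSE
end

section
/- Let G be a minimal counterexample to the statement 'mad(G) < 8/3 and Δ(G) ≥ 4 implies χ'_ss(G) ≤ 2Δ+2' (minimal in |V(G)|+|E(G)|), and let G* be obtained from G by deleting all vertices of degree 1. Then G* has minimum degree at least 2. -/
namespace SSE

open SimpleGraph

variable {V : Type*} {W : Type*}

/-- A counterexample to `mad < 8/3 ∧ Δ ≥ 4 → χ'_ss ≤ 2Δ+2`: a connected graph with
maximum degree `D ≥ 4`, `mad < 8/3` and `χ'_ss > 2D+2`. -/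
def IsCex {m : ℕ} (H : SimpleGraph (Fin m)) : Prop :=
  H.Connected ∧ MadLT H (8 / 3) ∧
    ∃ D : ℕ, 4 ≤ D ∧ (∀ v, natDeg H v ≤ D) ∧ (∃ v, natDeg H v = D) ∧
      2 * D + 2 < ssIndex H

/-!
Suppose a vertex `v` of `G*` has at most one neighbour `w` in `G*`. As `G` is connected and has a
vertex of degree `Δ ≥ 4`, `v` is not isolated, so it has a pendant neighbour `u`, and all its
neighbours other than `w` are leaves hanging from `v`.

A semistrong colouring of `G - u` with `k ≥ deg v + deg w` colours extends to `G`: fewer than `k`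
colours appear on edges at `v` or `w`, and `uv` takes another one. In the enlarged class `u` is
pendant, and a pendant vertex `p` of another edge cannot see `v`, since then `p` would be `w` or a
leaf of `v`, whose partner would be `v`.

So it suffices to colour `G - u` with `2Δ + 2` colours. If `G - u` still has a vertex of degree at
least `4`, minimality does it. Otherwise a vertex of degree `Δ` lost a neighbour, so it is `v`, and
`v` has a second leaf `u'`. By the extension step it now suffices to colour `G - u - u'`, of
maximum degree at most `3`, with `10 ≤ 2Δ + 2` colours: greedily if its maximum degree is at most
`2`, and otherwise by minimality after hanging a new leaf on a vertex of degree `3`.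
-/

open Function Set

lemma exists_lt_notMem_of_ncard_lt {s : Set ℕ} {k : ℕ} (hs : s.ncard < k) (hfin : s.Finite) :
    ∃ i < k, i ∉ s :=
  exists_mem_notMem_of_ncard_lt_ncard (t := Iio k) (by simpa using hs) hfin

theorem colorable_of_forall_natDeg_lt [Finite V] {G : SimpleGraph V} {k : ℕ}
    (h : ∀ v, natDeg G v < k) : G.Colorable k := by
  classical
  have : Fintype V := Fintype.ofFinite V
  suffices ∀ s : Finset V, ∃ c : V → ℕ, (∀ a ∈ s, c a < k) ∧
      ∀ a ∈ s, ∀ b ∈ s, G.Adj a b → c a ≠ c b by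
    obtain ⟨c, hck, hc⟩ := this Finset.univ
    exact ⟨Coloring.mk (fun a => ⟨c a, hck a (Finset.mem_univ a)⟩)
      fun hab hcab => hc _ (Finset.mem_univ _) _ (Finset.mem_univ _) hab (congrArg Fin.val hcab)⟩
  intro s
  induction s using Finset.induction_on with
  | empty => exact ⟨fun _ => 0, by simp, by simp⟩
  | insert x s hx ih =>
    obtain ⟨c, hck, hc⟩ := ih
    obtain ⟨i, hik, hi⟩ : ∃ i < k, i ∉ c '' (G.neighborSet x ∩ s) :=
      exists_lt_notMem_of_ncard_lt ((ncard_image_le (toFinite _)).trans_lt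
        ((ncard_le_ncard inter_subset_left (toFinite _)).trans_lt (h x))) (toFinite _)
    refine ⟨update c x i, fun a ha => ?_, fun a ha b hb hab => ?_⟩
    · rcases eq_or_ne a x with rfl | hax
      · simpa
      · simpa [hax] using hck a (by simpa [hax] using ha)
    · have hxs : ∀ y ∈ s, y ≠ x := fun y hy hyx => hx (hyx ▸ hy)
      rw [Finset.mem_insert] at ha hb
      rcases ha with rfl | ha <;> rcases hb with rfl | hb
      · exact absurd hab (G.loopless.irrefl _)
      · simpa [hxs b hb] using fun hcb => hi ⟨b, ⟨hab, hb⟩, hcb.symm⟩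
      · simpa [hxs a ha] using fun hca => hi ⟨a, ⟨hab.symm, ha⟩, hca⟩
      · simpa [hxs a ha, hxs b hb] using hc a ha b hb hab

variable {G : SimpleGraph V}

def conflictGraph (G : SimpleGraph V) : SimpleGraph G.edgeSet where
  Adj e f := e ≠ f ∧ ∃ a ∈ (e : Sym2 V), ∃ b ∈ (f : Sym2 V), a = b ∨ G.Adj a b
  symm := ⟨fun _ _ ⟨hne, a, ha, b, hb, hab⟩ =>
    ⟨hne.symm, b, hb, a, ha, hab.imp Eq.symm SimpleGraph.Adj.symm⟩⟩
  loopless := ⟨fun _ h => h.1 rfl⟩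

lemma isSemistrongMatching_of_forall_not_adj {M : Set (Sym2 V)} (hM : M ⊆ G.edgeSet)
    (h : ∀ e (he : e ∈ M) f (hf : f ∈ M), ¬ (conflictGraph G).Adj ⟨e, hM he⟩ ⟨f, hM hf⟩) :
    IsSemistrongMatching G M := by
  have hconf : ∀ e ∈ M, ∀ f ∈ M, e ≠ f → ∀ a ∈ e, ∀ b ∈ f, a ≠ b ∧ ¬ G.Adj a b :=
    fun e he f hf hef a ha b hb => not_or.1 fun hab =>
      h e he f hf ⟨fun h => hef (congrArg Subtype.val h), a, ha, b, hb, hab⟩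
  refine ⟨⟨hM, fun e he f hf hef v hve hvf => (hconf e he f hf hef v hve v hvf).1 rfl⟩,
    fun e he => ?_⟩
  induction e using Sym2.ind with
  | _ x y =>
    refine ⟨x, Sym2.mem_mk_left x y, ⟨_, he, Sym2.mem_mk_left x y⟩, y,
      ⟨⟨_, he, Sym2.mem_mk_right x y⟩, G.mem_edgeSet.1 (hM he)⟩, ?_⟩
    rintro u ⟨⟨f, hf, huf⟩, hxu⟩
    obtain rfl | hfe := eq_or_ne f s(x, y)
    · rcases Sym2.mem_iff.1 huf with rfl | rfl
      · exact absurd hxu (G.loopless.irrefl _)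
      · rfl
    · exact absurd hxu (hconf _ he f hf hfe.symm x (Sym2.mem_mk_left x y) u huf).2

lemma exists_ssColoring_of_colorable {k : ℕ} (h : (conflictGraph G).Colorable k) :
    ∃ c, IsPColoring G IsSemistrongMatching c k := by
  classical
  obtain ⟨C⟩ := h
  let c : Sym2 V → ℕ := fun e => if he : e ∈ G.edgeSet then C ⟨e, he⟩ else 0
  have hc : ∀ e (he : e ∈ G.edgeSet), c e = C ⟨e, he⟩ := fun e he => dif_pos he
  refine ⟨c, fun e he => hc e he ▸ (C _).is_lt, fun i => ?_⟩
  refine isSemistrongMatching_of_forall_not_adj (fun e he => he.1) ?_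
  rintro e ⟨he, rfl⟩ f ⟨hf, hcf⟩ hadj
  exact C.valid hadj (Fin.ext (by rw [← hc, ← hc, hcf]))

lemma ssIndex_le_of_colorable {k : ℕ} (h : (conflictGraph G).Colorable k) : ssIndex G ≤ k :=
  Nat.sInf_le (exists_ssColoring_of_colorable h)

lemma exists_ssColoring [Finite V] (G : SimpleGraph V) :
    ∃ c, IsPColoring G IsSemistrongMatching c (ssIndex G) := by
  have := Fintype.ofFinite G.edgeSet
  exact Nat.sInf_mem (s := {k | ∃ c, IsPColoring G IsSemistrongMatching c k})
    ⟨_, exists_ssColoring_of_colorable (conflictGraph G).colorable_of_fintype⟩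

lemma ncard_incidenceSet (G : SimpleGraph V) (u : V) :
    (G.incidenceSet u).ncard = natDeg G u := by
  classical
  rw [natDeg, ← Nat.card_coe_set_eq, ← Nat.card_coe_set_eq]
  exact Nat.card_congr (G.incidenceSetEquivNeighborSet u)

lemma natDeg_conflictGraph_le [Finite V] {Δ : ℕ} (hΔ : ∀ x, natDeg G x ≤ Δ) (e : G.edgeSet) :
    natDeg (conflictGraph G) e ≤ 2 * Δ ^ 2 := by
  obtain ⟨e, he⟩ := e
  induction e using Sym2.ind with
  | _ x y =>
    have hxy : G.Adj x y := G.mem_edgeSet.1 he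
    set t := (toFinite (G.neighborSet x ∪ G.neighborSet y)).toFinset
    -- `x ∈ N(y)` and `y ∈ N(x)`, so the edges meeting `xy` are covered too
    have hsub : Subtype.val '' (conflictGraph G).neighborSet ⟨s(x, y), he⟩ ⊆
        ⋃ b ∈ t, G.incidenceSet b := by
      rintro _ ⟨⟨f, hf⟩, ⟨-, a, ha, b, hb, hab⟩, rfl⟩
      simp only [t, mem_iUnion, Set.Finite.mem_toFinset, exists_prop]
      refine ⟨b, ?_, hf, hb⟩
      rcases Sym2.mem_iff.1 ha with rfl | rfl <;> rcases hab with rfl | hab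
      exacts [Or.inr hxy.symm, Or.inl hab, Or.inl hxy, Or.inr hab]
    have ht : t.card ≤ 2 * Δ := by
      rw [← ncard_eq_toFinset_card]
      have := ncard_union_le (G.neighborSet x) (G.neighborSet y)
      have := hΔ x; have := hΔ y
      simp only [natDeg] at *
      omega
    calc natDeg (conflictGraph G) ⟨s(x, y), he⟩
        = (Subtype.val '' (conflictGraph G).neighborSet ⟨s(x, y), he⟩).ncard :=
          (ncard_image_of_injective _ Subtype.val_injective).symm
      _ ≤ (⋃ b ∈ t, G.incidenceSet b).ncard := ncard_le_ncard hsub (toFinite _)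
      _ ≤ ∑ b ∈ t, (G.incidenceSet b).ncard := t.set_ncard_biUnion_le _
      _ ≤ t.card * Δ :=
        Finset.sum_le_card_nsmul _ _ _ fun b _ => (ncard_incidenceSet G b).trans_le (hΔ b)
      _ ≤ 2 * Δ ^ 2 := by nlinarith

theorem ssIndex_le_of_forall_natDeg_le [Finite V] {Δ : ℕ} (hΔ : ∀ x, natDeg G x ≤ Δ) :
    ssIndex G ≤ 2 * Δ ^ 2 + 1 :=
  ssIndex_le_of_colorable <| colorable_of_forall_natDeg_lt fun e =>
    Nat.lt_succ_of_le (natDeg_conflictGraph_le hΔ e)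

def edgesIn (G : SimpleGraph V) (s : Set V) : Set (Sym2 V) := {e ∈ G.edgeSet | ∀ v ∈ e, v ∈ s}

lemma madLT_iff {q : ℚ} :
    MadLT G q ↔ ∀ s : Set V, s.Finite → s.Nonempty → 2 * ((edgesIn G s).ncard : ℚ) < q * s.ncard :=
  Iff.rfl

@[simp] lemma edgesIn_univ : edgesIn G univ = G.edgeSet := by simp [edgesIn]

@[simp] lemma edgesIn_empty : edgesIn G ∅ = ∅ := by
  ext e
  simp only [edgesIn, mem_empty_iff_false, mem_ofPred_eq, iff_false, not_and]
  exact fun _ h => h _ (Sym2.out_fst_mem e)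

lemma adj_of_neighborSet_eq_singleton {u v : V} (hu : G.neighborSet u = {v}) : G.Adj u v :=
  show v ∈ G.neighborSet u by rw [hu]; rfl

lemma eq_of_adj_of_neighborSet_eq_singleton {u v y : V} (hu : G.neighborSet u = {v})
    (h : G.Adj u y) : y = v :=
  show y ∈ ({v} : Set V) from hu ▸ h

lemma eq_of_mem_edgeSet_of_neighborSet_eq_singleton {u v : V} (hu : G.neighborSet u = {v})
    {e : Sym2 V} (he : e ∈ G.edgeSet) (hue : u ∈ e) : e = s(u, v) := by
  rw [← Sym2.other_spec hue] at he ⊢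
  rw [eq_of_adj_of_neighborSet_eq_singleton hu (G.mem_edgeSet.1 he)]

lemma neighborSet_eq_singleton_of_natDeg_eq_one {x v : V} (h1 : natDeg G x = 1) (h : G.Adj x v) :
    G.neighborSet x = {v} := by
  obtain ⟨a, ha⟩ := ncard_eq_one.1 h1
  have hv : v ∈ G.neighborSet x := h
  rw [ha, mem_singleton_iff] at hv
  rw [ha, hv]

lemma exists_adj_ne_ne [Finite V] {v : V} (h : 3 ≤ natDeg G v) (a b : V) :
    ∃ y, G.Adj v y ∧ y ≠ a ∧ y ≠ b := by
  have : ¬ G.neighborSet v ⊆ {a, b} := fun hsub => by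
    have := (ncard_le_ncard hsub (toFinite _)).trans (ncard_insert_le a {b})
    rw [ncard_singleton] at this
    simp only [natDeg] at h
    omega
  obtain ⟨y, hy, hyab⟩ := not_subset.1 this
  simp only [mem_insert_iff, mem_singleton_iff, not_or] at hyab
  exact ⟨y, hy, hyab⟩

def AllLeavesBut (G : SimpleGraph V) (v w : V) : Prop :=
  ∀ x, G.Adj v x → x = w ∨ G.neighborSet x = {v}

section Comap

variable {f : W → V}

lemma image_edgesIn_comap (G : SimpleGraph V) (f : W → V) (s : Set V) :
    Sym2.map f '' edgesIn (G.comap f) (f ⁻¹' s) = edgesIn G (s ∩ range f) := by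
  ext e
  constructor
  · rintro ⟨e', ⟨he', hs⟩, rfl⟩
    induction e' using Sym2.ind with
    | _ x y => simp_all [edgesIn]
  · rintro ⟨he, hs⟩
    induction e using Sym2.ind with
    | _ x y =>
      obtain ⟨⟨-, a, rfl⟩, -, b, rfl⟩ : (x ∈ s ∩ range f) ∧ y ∈ s ∩ range f := by simp_all
      exact ⟨s(a, b), by simp_all [edgesIn]⟩

lemma ncard_edgesIn_comap (G : SimpleGraph V) (hf : Injective f) (s : Set V) :
    (edgesIn (G.comap f) (f ⁻¹' s)).ncard = (edgesIn G (s ∩ range f)).ncard := by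
  rw [← image_edgesIn_comap, ncard_image_of_injective _ (Sym2.map.injective hf)]

lemma MadLT.comap (hf : Injective f) {q : ℚ} (h : MadLT G q) : MadLT (G.comap f) q := by
  rw [madLT_iff] at h ⊢
  intro s hs hne
  have hcard := ncard_edgesIn_comap G hf (f '' s)
  rw [preimage_image_eq s hf, inter_eq_left.2 (image_subset_range f s)] at hcard
  rw [hcard, ← ncard_image_of_injective s hf]
  exact h (f '' s) (hs.image f) (hne.image f)

lemma natDeg_comap (hf : Injective f) (x : W) :
    natDeg (G.comap f) x = (G.neighborSet (f x) ∩ range f).ncard := by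
  rw [natDeg, ← ncard_image_of_injective _ hf, ← image_preimage_eq_inter_range]
  rfl

lemma natDeg_comap_le [Finite V] (hf : Injective f) (x : W) :
    natDeg (G.comap f) x ≤ natDeg G (f x) := by
  rw [natDeg_comap hf]
  exact ncard_le_ncard inter_subset_left (toFinite _)

lemma neighborSet_comap_eq_singleton (hf : Injective f) {x y : W}
    (h : G.neighborSet (f x) = {f y}) : (G.comap f).neighborSet x = {y} := by
  ext z
  change f z ∈ G.neighborSet (f x) ↔ _
  rw [h, mem_singleton_iff, mem_singleton_iff, hf.eq_iff]

lemma AllLeavesBut.comap (hf : Injective f) {v w : W} (h : AllLeavesBut G (f v) (f w)) :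
    AllLeavesBut (G.comap f) v w := fun _ hy =>
  (h _ hy).imp (fun h => hf h) fun h => neighborSet_comap_eq_singleton hf h

lemma cov_image (f : W → V) (M : Set (Sym2 W)) : cov (Sym2.map f '' M) = f '' cov M := by
  ext x
  constructor
  · rintro ⟨_, ⟨e, he, rfl⟩, hx⟩
    obtain ⟨a, ha, rfl⟩ := Sym2.mem_map.1 hx
    exact ⟨a, ⟨e, he, ha⟩, rfl⟩
  · rintro ⟨a, ⟨e, he, ha⟩, rfl⟩
    exact ⟨_, ⟨e, he, rfl⟩, Sym2.mem_map.2 ⟨a, ha, rfl⟩⟩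

lemma IsSemistrongMatching.image (hf : Injective f) {M : Set (Sym2 W)}
    (hM : IsSemistrongMatching (G.comap f) M) : IsSemistrongMatching G (Sym2.map f '' M) := by
  obtain ⟨⟨hME, hMd⟩, hMp⟩ := hM
  refine ⟨⟨?_, ?_⟩, ?_⟩
  · rintro _ ⟨e, he, rfl⟩
    exact (Hom.comap f G).map_mem_edgeSet (hME he)
  · rintro _ ⟨e, he, rfl⟩ _ ⟨e', he', rfl⟩ hne x hx hx'
    obtain ⟨a, ha, rfl⟩ := Sym2.mem_map.1 hx
    obtain ⟨a', ha', haa⟩ := Sym2.mem_map.1 hx'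
    exact hMd e he e' he' (fun h => hne (h ▸ rfl)) a ha (hf haa ▸ ha')
  · rintro _ ⟨e, he, rfl⟩
    obtain ⟨p, hp, hpcov, q, ⟨hqcov, hq⟩, huniq⟩ := hMp e he
    refine ⟨f p, Sym2.mem_map.2 ⟨p, hp, rfl⟩, ?_⟩
    rw [PendantIn, cov_image]
    refine ⟨mem_image_of_mem f hpcov, f q, ⟨mem_image_of_mem f hqcov, hq⟩, ?_⟩
    rintro _ ⟨⟨b, hb, rfl⟩, hy⟩
    rw [huniq b ⟨hb, hy⟩]

lemma IsSemistrongMatching.comap (hf : Injective f) {M : Set (Sym2 V)}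
    (hM : IsSemistrongMatching G M) {M' : Set (Sym2 W)} (hM' : M' ⊆ (G.comap f).edgeSet)
    (hsub : Sym2.map f '' M' ⊆ M) : IsSemistrongMatching (G.comap f) M' := by
  obtain ⟨⟨-, hMd⟩, hMp⟩ := hM
  have hcov : ∀ x ∈ cov M', f x ∈ cov M := fun x ⟨e, he, hx⟩ =>
    ⟨_, hsub ⟨e, he, rfl⟩, Sym2.mem_map.2 ⟨x, hx, rfl⟩⟩
  refine ⟨⟨hM', fun e he e' he' hne x hx hx' => hMd _ (hsub ⟨e, he, rfl⟩) _ (hsub ⟨e', he', rfl⟩)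
    (fun h => hne (Sym2.map.injective hf h)) (f x) (Sym2.mem_map.2 ⟨x, hx, rfl⟩)
    (Sym2.mem_map.2 ⟨x, hx', rfl⟩)⟩, fun e he => ?_⟩
  obtain ⟨_, hp, -, q, -, huniq⟩ := hMp _ (hsub ⟨e, he, rfl⟩)
  obtain ⟨a, ha, rfl⟩ := Sym2.mem_map.1 hp
  have heab : s(a, Sym2.Mem.other ha) = e := Sym2.other_spec ha
  have hb : Sym2.Mem.other ha ∈ cov M' := ⟨e, he, Sym2.other_mem ha⟩
  have hab : (G.comap f).Adj a (Sym2.Mem.other ha) := hM' (heab ▸ he)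
  have hbq : f (Sym2.Mem.other ha) = q := huniq _ ⟨hcov _ hb, hab⟩
  exact ⟨a, ha, ⟨e, he, ha⟩, _, ⟨hb, hab⟩,
    fun y ⟨hy, hay⟩ => hf ((huniq _ ⟨hcov y hy, hay⟩).trans hbq.symm)⟩

lemma ssIndex_comap_le [Finite V] (hf : Injective f) : ssIndex (G.comap f) ≤ ssIndex G := by
  obtain ⟨c, hc, hcM⟩ := exists_ssColoring G
  refine Nat.sInf_le ⟨c ∘ Sym2.map f, fun e he => hc _ ((Hom.comap f G).map_mem_edgeSet he),
    fun i => (hcM i).comap hf (fun e he => he.1) ?_⟩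
  rintro _ ⟨e, ⟨he, hce⟩, rfl⟩
  exact ⟨(Hom.comap f G).map_mem_edgeSet he, hce⟩

end Comap

section DeleteVertex

variable {f : W → V} {u : V}

lemma image_edgeSet_comap (hrange : range f = {u}ᶜ) :
    Sym2.map f '' (G.comap f).edgeSet = G.edgeSet \ G.incidenceSet u := by
  have h := image_edgesIn_comap G f univ
  rw [preimage_univ, edgesIn_univ, univ_inter, hrange] at h
  rw [h]
  ext e
  simp only [edgesIn, mem_ofPred_eq, mem_compl_iff, mem_singleton_iff, mem_sdiff, incidenceSet]
  exact and_congr_right fun he => ⟨fun h hu => h u hu.2 rfl, fun h v hv hvu => h ⟨he, hvu ▸ hv⟩⟩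

lemma ncard_edgeSet_comap_add_natDeg [Finite V] (hf : Injective f) (hrange : range f = {u}ᶜ) :
    (G.comap f).edgeSet.ncard + natDeg G u = G.edgeSet.ncard := by
  rw [← ncard_image_of_injective _ (Sym2.map.injective hf), image_edgeSet_comap hrange,
    ← ncard_incidenceSet]
  exact ncard_sdiff_add_ncard_of_subset (G.incidenceSet_subset u) (toFinite _)

lemma natDeg_comap_eq_ncard_diff (hf : Injective f) (hrange : range f = {u}ᶜ) (x : W) :
    natDeg (G.comap f) x = (G.neighborSet (f x) \ {u}).ncard := by
  rw [natDeg_comap hf, hrange, ← sdiff_eq]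

lemma natDeg_comap_add_one_of_adj [Finite V] (hf : Injective f) (hrange : range f = {u}ᶜ)
    {x : W} (h : G.Adj (f x) u) : natDeg (G.comap f) x + 1 = natDeg G (f x) := by
  rw [natDeg_comap_eq_ncard_diff hf hrange]
  exact ncard_sdiff_singleton_add_one h

lemma natDeg_comap_of_not_adj (hf : Injective f) (hrange : range f = {u}ᶜ)
    {x : W} (h : ¬ G.Adj (f x) u) : natDeg (G.comap f) x = natDeg G (f x) := by
  rw [natDeg_comap_eq_ncard_diff hf hrange,
    sdiff_singleton_eq_self (show u ∉ G.neighborSet (f x) from h)]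
  rfl

lemma natDeg_le_natDeg_comap_add_one [Finite V] (hf : Injective f) (hrange : range f = {u}ᶜ)
    (x : W) : natDeg G (f x) ≤ natDeg (G.comap f) x + 1 := by
  by_cases h : G.Adj (f x) u
  · exact (natDeg_comap_add_one_of_adj hf hrange h).ge
  · exact (natDeg_comap_of_not_adj hf hrange h).ge.trans (Nat.le_succ _)

lemma adj_of_natDeg_comap_lt (hf : Injective f) (hrange : range f = {u}ᶜ) {x : W}
    (h : natDeg (G.comap f) x < natDeg G (f x)) : G.Adj (f x) u := by
  by_contra hx
  exact h.ne (natDeg_comap_of_not_adj hf hrange hx)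

lemma connected_comap (hf : Injective f) (hrange : range f = {u}ᶜ) {v : V}
    (hconn : G.Connected) (hu : G.neighborSet u = {v}) : (G.comap f).Connected := by
  have hvu : v ∈ range f := by
    rw [hrange]
    exact (G.ne_of_adj (adj_of_neighborSet_eq_singleton hu)).symm
  have : Nonempty (range (Embedding.comap ⟨f, hf⟩ G)) := ⟨⟨v, hvu⟩⟩
  refine ((Embedding.comap ⟨f, hf⟩ G).isoInduceRange.connected_iff).2 ⟨?_⟩
  refine hconn.preconnected.induce_of_degree_eq_one fun x hx => ?_
  change x ∉ range f at hx
  rw [hrange, notMem_compl_iff, mem_singleton_iff] at hx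
  rw [hx, hu]
  exact subsingleton_singleton

lemma connected_of_connected_comap (hrange : range f = {u}ᶜ) (h : (G.comap f).Connected)
    {z : W} (hadj : G.Adj u (f z)) : G.Connected := by
  have hreach : ∀ x, G.Reachable (f z) x := by
    intro x
    by_cases hx : x = u
    · exact hx ▸ hadj.symm.reachable
    · obtain ⟨y, rfl⟩ : x ∈ range f := hrange ▸ hx
      exact (h.preconnected z y).map (Hom.comap f G)
  exact (connected_iff _).2 ⟨fun a b => (hreach a).symm.trans (hreach b), ⟨f z⟩⟩

lemma MadLT.of_comap [Finite V] (hf : Injective f) (hrange : range f = {u}ᶜ)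
    (hu : natDeg G u ≤ 1) {q : ℚ} (hq : 2 < q) (h : MadLT (G.comap f) q) : MadLT G q := by
  rw [madLT_iff] at h ⊢
  have hmad : ∀ t : Set V, t.Finite → (t \ {u}).Nonempty →
      2 * ((edgesIn G (t \ {u})).ncard : ℚ) < q * (t \ {u}).ncard := by
    intro t ht ⟨x, hxt, hxu⟩
    obtain ⟨y, rfl⟩ : x ∈ range f := hrange ▸ hxu
    have := h (f ⁻¹' t) (ht.preimage hf.injOn) ⟨y, hxt⟩
    rwa [ncard_edgesIn_comap G hf, ← ncard_image_of_injective _ hf, image_preimage_eq_inter_range,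
      hrange, ← sdiff_eq] at this
  intro s hs hne
  by_cases hus : u ∈ s
  · have hsub : edgesIn G s ⊆ edgesIn G (s \ {u}) ∪ G.incidenceSet u := by
      rintro e ⟨he, hes⟩
      by_cases hue : u ∈ e
      · exact Or.inr ⟨he, hue⟩
      · exact Or.inl ⟨he, fun v hv => ⟨hes v hv, fun hvu => hue (hvu ▸ hv)⟩⟩
    have hcount : ((edgesIn G s).ncard : ℚ) ≤ (edgesIn G (s \ {u})).ncard + 1 := by
      have := (ncard_le_ncard hsub (toFinite _)).trans (ncard_union_le _ _)
      rw [ncard_incidenceSet] at this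
      exact_mod_cast this.trans (by omega)
    have hcard : s.ncard = (s \ {u}).ncard + 1 := (ncard_sdiff_singleton_add_one hus hs).symm
    have hle : 2 * ((edgesIn G (s \ {u})).ncard : ℚ) ≤ q * (s \ {u}).ncard := by
      rcases (s \ {u}).eq_empty_or_nonempty with h0 | h0
      · simp [h0]
      · exact (hmad s hs h0).le
    rw [hcard]
    push_cast
    linarith
  · rw [← sdiff_singleton_eq_self hus]
    exact hmad s hs (by rwa [sdiff_singleton_eq_self hus])

end DeleteVertex

lemma cov_insert (e : Sym2 V) (M : Set (Sym2 V)) : cov (insert e M) = {x | x ∈ e} ∪ cov M := by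
  ext x
  simp only [cov, mem_insert_iff, exists_eq_or_imp, mem_union, mem_ofPred_eq]

lemma IsSemistrongMatching.insert_pendant {M : Set (Sym2 V)} (hM : IsSemistrongMatching G M)
    {u v w : V} (hu : G.neighborSet u = {v})
    (hw : AllLeavesBut G v w) (hv : v ∉ cov M) (hwM : w ∉ cov M) :
    IsSemistrongMatching G (insert s(u, v) M) := by
  obtain ⟨⟨hME, hMd⟩, hMp⟩ := hM
  have huv := adj_of_neighborSet_eq_singleton hu
  have huM : u ∉ cov M := fun ⟨e, he, hue⟩ => hv
    ⟨e, he, eq_of_mem_edgeSet_of_neighborSet_eq_singleton hu (hME he) hue ▸ Sym2.mem_mk_right u v⟩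
  have hfree : ∀ f ∈ M, ∀ z ∈ s(u, v), z ∉ f := fun f hf z hz hzf => by
    rcases Sym2.mem_iff.1 hz with rfl | rfl
    exacts [huM ⟨f, hf, hzf⟩, hv ⟨f, hf, hzf⟩]
  refine ⟨⟨insert_subset huv hME, ?_⟩, ?_⟩
  · rintro e (rfl | he) f (rfl | hf) hne z hz hzf
    exacts [hne rfl, hfree f hf z hz hzf, hfree e he z hzf hz, hMd e he f hf hne z hz hzf]
  rintro e (rfl | he)
  · refine ⟨u, Sym2.mem_mk_left u v, ⟨_, mem_insert _ _, Sym2.mem_mk_left u v⟩, v,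
      ⟨⟨_, mem_insert _ _, Sym2.mem_mk_right u v⟩, huv⟩, fun y ⟨_, hy⟩ => ?_⟩
    exact eq_of_adj_of_neighborSet_eq_singleton hu hy
  obtain ⟨p, hp, hpM, q, ⟨hqM, hpq⟩, huniq⟩ := hMp e he
  refine ⟨p, hp, by rw [cov_insert]; exact Or.inr hpM, q,
    ⟨by rw [cov_insert]; exact Or.inr hqM, hpq⟩, fun y ⟨hy, hpy⟩ => ?_⟩
  rw [cov_insert] at hy
  rcases hy with hy | hy
  -- `p` cannot see `u`, and if it sees `v` it is `w` or a leaf of `v` whose partner `q` is `v`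
  · exfalso
    rcases Sym2.mem_iff.1 hy with rfl | rfl
    · exact hv (eq_of_adj_of_neighborSet_eq_singleton hu hpy.symm ▸ hpM)
    · rcases hw p hpy.symm with rfl | hp
      · exact hwM hpM
      · exact hv (eq_of_adj_of_neighborSet_eq_singleton hp hpq ▸ hqM)
  · exact huniq y ⟨hy, hpy⟩

section Extension

variable {f : W → V} {u v w : V}

lemma edgeSet_eq_insert_image_comap (hrange : range f = {u}ᶜ) (hu : G.neighborSet u = {v}) :
    G.edgeSet = insert s(u, v) (Sym2.map f '' (G.comap f).edgeSet) := by
  rw [image_edgeSet_comap hrange]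
  ext e
  constructor
  · intro he
    by_cases hue : u ∈ e
    · exact Or.inl (eq_of_mem_edgeSet_of_neighborSet_eq_singleton hu he hue)
    · exact Or.inr ⟨he, fun h => hue h.2⟩
  · rintro (rfl | he)
    exacts [adj_of_neighborSet_eq_singleton hu, he.1]

lemma map_ne_mk_of_range_eq_compl (hrange : range f = {u}ᶜ) (e : Sym2 W) (x : V) :
    Sym2.map f e ≠ s(u, x) := fun h => by
  obtain ⟨y, -, hy⟩ := Sym2.mem_map.1 (h ▸ Sym2.mem_mk_left u x)
  exact (hrange ▸ mem_range_self y : f y ∈ ({u}ᶜ : Set V)) hy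

lemma isPColoring_extend_of_pendant (hf : Injective f) (hrange : range f = {u}ᶜ)
    (hu : G.neighborSet u = {v}) (hw : AllLeavesBut G v w) {c : Sym2 W → ℕ} {k i₀ : ℕ}
    (hc : IsPColoring (G.comap f) IsSemistrongMatching c k) (hi₀k : i₀ < k)
    (hi₀ : ∀ e ∈ (G.comap f).edgeSet, v ∈ Sym2.map f e ∨ w ∈ Sym2.map f e → c e ≠ i₀) :
    IsPColoring G IsSemistrongMatching (extend (Sym2.map f) c fun _ => i₀) k := by
  set c' := extend (Sym2.map f) c fun _ => i₀
  have hc' : ∀ e, c' (Sym2.map f e) = c e := (Sym2.map.injective hf).extend_apply c _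
  have hc'uv : c' s(u, v) = i₀ :=
    extend_apply' _ _ _ fun ⟨e, he⟩ => map_ne_mk_of_range_eq_compl hrange e v he
  have hE := edgeSet_eq_insert_image_comap hrange hu
  refine ⟨fun e he => ?_, fun i => ?_⟩
  · rw [hE] at he
    rcases he with rfl | ⟨e, he, rfl⟩
    exacts [hc'uv ▸ hi₀k, hc' e ▸ hc.1 e he]
  set M := {e | e ∈ (G.comap f).edgeSet ∧ c e = i}
  have hclass : {e | e ∈ G.edgeSet ∧ c' e = i} = {e | e = s(u, v) ∧ i₀ = i} ∪ Sym2.map f '' M := by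
    ext e
    rw [hE]
    constructor
    · rintro ⟨rfl | ⟨e, he, rfl⟩, hce⟩
      exacts [Or.inl ⟨rfl, hc'uv ▸ hce⟩, Or.inr ⟨e, ⟨he, (hc' e).symm.trans hce⟩, rfl⟩]
    · rintro (⟨rfl, rfl⟩ | ⟨e, ⟨he, rfl⟩, rfl⟩)
      exacts [⟨Or.inl rfl, hc'uv⟩, ⟨Or.inr ⟨e, he, rfl⟩, hc' e⟩]
  rw [hclass]
  obtain rfl | hi := eq_or_ne i₀ i
  · simp only [and_true, ofPred_eq_eq_singleton, singleton_union]
    refine ((hc.2 i₀).image hf).insert_pendant hu hw ?_ ?_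
    · rintro ⟨_, ⟨e, ⟨he, hce⟩, rfl⟩, hve⟩
      exact hi₀ e he (Or.inl hve) hce
    · rintro ⟨_, ⟨e, ⟨he, hce⟩, rfl⟩, hwe⟩
      exact hi₀ e he (Or.inr hwe) hce
  · simp only [hi, and_false, ofPred_false, empty_union]
    exact (hc.2 i).image hf

theorem ssIndex_le_of_comap_pendant [Finite V] (hf : Injective f) (hrange : range f = {u}ᶜ)
    (hu : G.neighborSet u = {v}) (hw : AllLeavesBut G v w) {k : ℕ}
    (hk : natDeg G v + natDeg G w ≤ k) (hH : ssIndex (G.comap f) ≤ k) : ssIndex G ≤ k := by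
  have : Finite W := Finite.of_injective f hf
  obtain ⟨c, hc⟩ := exists_ssColoring (G.comap f)
  set A := {e | e ∈ (G.comap f).edgeSet ∧ (v ∈ Sym2.map f e ∨ w ∈ Sym2.map f e)}
  have hA : Sym2.map f '' A ⊆ (G.incidenceSet v \ {s(u, v)}) ∪ G.incidenceSet w := by
    rintro _ ⟨e, ⟨he, hve | hwe⟩, rfl⟩
    · exact Or.inl ⟨⟨(Hom.comap f G).map_mem_edgeSet he, hve⟩,
        map_ne_mk_of_range_eq_compl hrange e v⟩
    · exact Or.inr ⟨(Hom.comap f G).map_mem_edgeSet he, hwe⟩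
  have hv : (G.incidenceSet v \ {s(u, v)}).ncard + 1 = natDeg G v := by
    rw [← ncard_incidenceSet]
    exact ncard_sdiff_singleton_add_one ⟨adj_of_neighborSet_eq_singleton hu, Sym2.mem_mk_right u v⟩
  have hcard : (c '' A).ncard < k :=
    calc (c '' A).ncard ≤ A.ncard := ncard_image_le (toFinite _)
      _ = (Sym2.map f '' A).ncard := (ncard_image_of_injective _ (Sym2.map.injective hf)).symm
      _ ≤ (G.incidenceSet v \ {s(u, v)}).ncard + (G.incidenceSet w).ncard :=
        (ncard_le_ncard hA (toFinite _)).trans (ncard_union_le _ _)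
      _ < k := by rw [ncard_incidenceSet]; omega
  obtain ⟨i₀, hi₀k, hi₀⟩ := exists_lt_notMem_of_ncard_lt hcard (toFinite _)
  exact Nat.sInf_le ⟨_, isPColoring_extend_of_pendant hf hrange hu hw
    ⟨fun e he => (hc.1 e he).trans_le hH, hc.2⟩ hi₀k fun e he hvw hce => hi₀ ⟨e, ⟨he, hvw⟩, hce⟩⟩

end Extension

section AddLeaf

variable {m : ℕ}

def addLeaf (H : SimpleGraph (Fin m)) (z : Fin m) : SimpleGraph (Fin (m + 1)) :=
  H.map Fin.castSuccEmb ⊔ edge z.castSucc (Fin.last m)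

variable {H : SimpleGraph (Fin m)} {z : Fin m}

lemma range_castSucc_eq_compl : range (Fin.castSucc : Fin m → Fin (m + 1)) = {Fin.last m}ᶜ := by
  rw [← Fin.succAbove_last, Fin.range_succAbove]

@[simp] lemma comap_addLeaf : (addLeaf H z).comap Fin.castSucc = H := by
  ext a b
  simp only [addLeaf, comap_adj, sup_adj, edge_adj, Fin.castSucc_ne_last, Fin.castSucc_inj]
  rw [← Fin.coe_castSuccEmb, map_adj_apply]
  simp

lemma neighborSet_addLeaf_last : (addLeaf H z).neighborSet (Fin.last m) = {z.castSucc} := by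
  ext x
  simp only [addLeaf, mem_neighborSet, sup_adj, edge_adj, map_adj, mem_singleton_iff]
  simp only [Fin.coe_castSuccEmb, Fin.castSucc_ne_last, false_and, and_false, exists_false,
    false_or, true_and]
  constructor
  · rintro ⟨⟨-, h⟩ | h, hne⟩
    exacts [absurd h.symm hne, h]
  · rintro rfl
    exact ⟨Or.inr rfl, (Fin.castSucc_ne_last z).symm⟩

lemma natDeg_addLeaf_last : natDeg (addLeaf H z) (Fin.last m) = 1 := by
  rw [natDeg, neighborSet_addLeaf_last, ncard_singleton]

lemma natDeg_addLeaf_castSucc_le (a : Fin m) :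
    natDeg (addLeaf H z) a.castSucc ≤ natDeg H a + 1 := by
  simpa using natDeg_le_natDeg_comap_add_one (G := addLeaf H z) (Fin.castSucc_injective m)
    range_castSucc_eq_compl a

lemma natDeg_addLeaf_castSucc_self : natDeg (addLeaf H z) z.castSucc = natDeg H z + 1 := by
  simpa using (natDeg_comap_add_one_of_adj (G := addLeaf H z) (Fin.castSucc_injective m)
    range_castSucc_eq_compl (adj_of_neighborSet_eq_singleton neighborSet_addLeaf_last).symm).symm

lemma ncard_edgeSet_addLeaf : (addLeaf H z).edgeSet.ncard = H.edgeSet.ncard + 1 := by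
  simpa [natDeg_addLeaf_last, eq_comm] using ncard_edgeSet_comap_add_natDeg
    (G := addLeaf H z) (Fin.castSucc_injective m) range_castSucc_eq_compl

lemma connected_addLeaf (h : H.Connected) : (addLeaf H z).Connected :=
  connected_of_connected_comap range_castSucc_eq_compl (by rwa [comap_addLeaf])
    (adj_of_neighborSet_eq_singleton neighborSet_addLeaf_last)

lemma MadLT.addLeaf {q : ℚ} (hq : 2 < q) (h : MadLT H q) : MadLT (addLeaf H z) q :=
  MadLT.of_comap (Fin.castSucc_injective m) range_castSucc_eq_compl natDeg_addLeaf_last.le hq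
    (by rwa [comap_addLeaf])

end AddLeaf

lemma natDeg_ne_zero_of_connected [Finite V] (hconn : G.Connected) {x : V} (hx : natDeg G x ≠ 0)
    (y : V) : natDeg G y ≠ 0 := by
  obtain ⟨z, hz⟩ := nonempty_of_ncard_ne_zero hx
  have : Nontrivial V := ⟨⟨x, z, G.ne_of_adj hz⟩⟩
  obtain ⟨w, hw⟩ := not_forall_not.1 (hconn.preconnected.not_isIsolated y)
  exact ((ncard_pos (toFinite _)).2 ⟨w, hw⟩).ne'

lemma exists_pendant_of_natDeg_induce_lt_two [Finite V] {v : V} (hv : natDeg G v ≠ 1)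
    (hv0 : natDeg G v ≠ 0) (h : natDeg (G.induce {x | natDeg G x ≠ 1}) ⟨v, hv⟩ < 2) :
    ∃ u w, G.neighborSet u = {v} ∧ w ≠ u ∧ AllLeavesBut G v w := by
  set S := {x | natDeg G x ≠ 1}
  have hS : (G.neighborSet v ∩ S).ncard ≤ 1 := by
    have := natDeg_comap (G := G) Subtype.val_injective (⟨v, hv⟩ : S)
    rw [Subtype.range_coe] at this
    calc _ = natDeg (G.induce S) ⟨v, hv⟩ := this.symm
      _ ≤ 1 := Nat.le_of_lt_succ h
  have hleaf : ∀ x, G.Adj v x → x ∉ S → G.neighborSet x = {v} := fun x hx hxS =>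
    neighborSet_eq_singleton_of_natDeg_eq_one (not_not.1 hxS) hx.symm
  obtain ⟨u, huv, huS⟩ : ∃ u, G.Adj v u ∧ u ∉ S := by
    by_contra! hall
    rw [inter_eq_left.2 (show G.neighborSet v ⊆ S from hall)] at hS
    exact hv (le_antisymm hS (Nat.one_le_iff_ne_zero.2 hv0))
  obtain ⟨w, hw, hwu⟩ : ∃ w, G.neighborSet v ∩ S ⊆ {w} ∧ w ≠ u := by
    rcases (G.neighborSet v ∩ S).eq_empty_or_nonempty with h0 | ⟨w, hw⟩
    · exact ⟨v, h0 ▸ empty_subset _, G.ne_of_adj huv⟩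
    · exact ⟨w, fun y hy => (ncard_le_one (toFinite _)).1 hS y hy w hw, fun h => huS (h ▸ hw.2)⟩
  refine ⟨u, w, hleaf u huv huS, hwu, fun x hx => ?_⟩
  by_cases hxS : x ∈ S
  exacts [Or.inl (hw ⟨hx, hxS⟩), Or.inr (hleaf x hx hxS)]

section MinimalCounterexample

def NoCexBelow (N : ℕ) : Prop :=
  ∀ (m : ℕ) (H : SimpleGraph (Fin m)), IsCex H → N ≤ m + H.edgeSet.ncard

variable {N : ℕ}

lemma ssIndex_le_of_size_lt (hmin : NoCexBelow N) {m D : ℕ} {H : SimpleGraph (Fin m)}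
    (hsize : m + H.edgeSet.ncard < N) (hconn : H.Connected) (hmad : MadLT H (8 / 3))
    (hD : ∀ x, natDeg H x ≤ D) (h4 : ∃ x, 4 ≤ natDeg H x) : ssIndex H ≤ 2 * D + 2 := by
  obtain ⟨x, hx⟩ := h4
  obtain ⟨y, -, hy⟩ := Finset.exists_max_image Finset.univ (natDeg H) ⟨x, Finset.mem_univ x⟩
  have hy' : ∀ z, natDeg H z ≤ natDeg H y := fun z => hy z (Finset.mem_univ z)
  have : ssIndex H ≤ 2 * natDeg H y + 2 := by
    by_contra! hlt
    exact (hmin m H ⟨hconn, hmad, _, hx.trans (hy' x), hy', ⟨y, rfl⟩, hlt⟩).not_gt hsize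
  have := hD y
  omega

lemma ssIndex_le_ten_of_natDeg_le_three (hmin : NoCexBelow N) {m : ℕ} {H : SimpleGraph (Fin m)}
    (hsize : m + H.edgeSet.ncard + 2 < N) (hconn : H.Connected) (hmad : MadLT H (8 / 3))
    (hdeg : ∀ x, natDeg H x ≤ 3) : ssIndex H ≤ 10 := by
  by_cases h3 : ∃ z, natDeg H z = 3
  · -- hang a leaf on a vertex of degree 3 to reach maximum degree 4
    obtain ⟨z, hz⟩ := h3
    have hK : ∀ x, natDeg (addLeaf H z) x ≤ 4 := by
      intro x
      induction x using Fin.lastCases with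
      | last => rw [natDeg_addLeaf_last]; omega
      | cast a => have := natDeg_addLeaf_castSucc_le (H := H) (z := z) a; have := hdeg a; omega
    calc ssIndex H = ssIndex ((addLeaf H z).comap Fin.castSucc) := by rw [comap_addLeaf]
      _ ≤ ssIndex (addLeaf H z) := ssIndex_comap_le (Fin.castSucc_injective m)
      _ ≤ 2 * 4 + 2 := ssIndex_le_of_size_lt hmin (by rw [ncard_edgeSet_addLeaf]; omega)
        (connected_addLeaf hconn) (hmad.addLeaf (by norm_num)) hK
        ⟨z.castSucc, by rw [natDeg_addLeaf_castSucc_self, hz]⟩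
  · rw [not_exists] at h3
    have := ssIndex_le_of_forall_natDeg_le (G := H) (Δ := 2) fun x => by
      have := hdeg x
      have := h3 x
      omega
    omega

lemma ssIndex_le_ten_of_pendant (hmin : NoCexBelow N) {m : ℕ} {H : SimpleGraph (Fin m)}
    (hsize : m + H.edgeSet.ncard < N) (hconn : H.Connected) (hmad : MadLT H (8 / 3))
    (hdeg : ∀ x, natDeg H x ≤ 3) {u v w : Fin m} (hu : H.neighborSet u = {v})
    (hw : AllLeavesBut H v w) : ssIndex H ≤ 10 := by
  obtain ⟨m, rfl⟩ := Nat.exists_eq_succ_of_ne_zero u.pos.ne'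
  have hf := Fin.succAbove_right_injective (p := u)
  have hr := Fin.range_succAbove u
  refine ssIndex_le_of_comap_pendant hf hr hu hw (by have := hdeg v; have := hdeg w; omega) ?_
  have hE := ncard_edgeSet_comap_add_natDeg hf hr (G := H)
  rw [natDeg, hu, ncard_singleton] at hE
  exact ssIndex_le_ten_of_natDeg_le_three hmin (by omega) (connected_comap hf hr hconn hu)
    (hmad.comap hf) fun x => (natDeg_comap_le hf x).trans (hdeg _)

theorem not_isCex_of_pendant {n : ℕ} {G : SimpleGraph (Fin n)}
    (hmin : NoCexBelow (n + G.edgeSet.ncard)) {u v w : Fin n} (hu : G.neighborSet u = {v})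
    (hwu : w ≠ u) (hw : AllLeavesBut G v w) : ¬ IsCex G := by
  rintro ⟨hconn, hmad, D, hD4, hD, ⟨x, hx⟩, hss⟩
  refine hss.not_ge ?_
  obtain ⟨m, rfl⟩ := Nat.exists_eq_succ_of_ne_zero u.pos.ne'
  have hf := Fin.succAbove_right_injective (p := u)
  have hr := Fin.range_succAbove u
  have hu1 : natDeg G u = 1 := by rw [natDeg, hu, ncard_singleton]
  have hE := ncard_edgeSet_comap_add_natDeg hf hr (G := G)
  have hHconn := connected_comap hf hr hconn hu
  have hHmad := hmad.comap hf
  refine ssIndex_le_of_comap_pendant hf hr hu hw (by have := hD v; have := hD w; omega) ?_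
  by_cases h4 : ∃ y, 4 ≤ natDeg (G.comap u.succAbove) y
  · exact ssIndex_le_of_size_lt hmin (by omega) hHconn hHmad
      (fun y => (natDeg_comap_le hf y).trans (hD _)) h4
  rw [not_exists] at h4
  -- the vertex of degree `D ≥ 4` loses a neighbour in `G - u`, so it is `v`
  have hxv : x = v := by
    obtain ⟨x', rfl⟩ : x ∈ range u.succAbove := hr ▸ fun h : x = u => by rw [h] at hx; omega
    exact eq_of_adj_of_neighborSet_eq_singleton hu
      (adj_of_natDeg_comap_lt hf hr (by have := h4 x'; omega)).symm
  obtain ⟨u', hvu', hu'u, hu'w⟩ := exists_adj_ne_ne (G := G) (v := v) (by rw [← hxv]; omega) u w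
  obtain ⟨v₀, rfl⟩ : v ∈ range u.succAbove :=
    hr ▸ (G.ne_of_adj (adj_of_neighborSet_eq_singleton hu)).symm
  obtain ⟨w₀, rfl⟩ : w ∈ range u.succAbove := hr ▸ hwu
  obtain ⟨u₀, rfl⟩ : u' ∈ range u.succAbove := hr ▸ hu'u
  have := ssIndex_le_ten_of_pendant hmin (by omega) hHconn hHmad
    (fun y => Nat.le_of_lt_succ (not_le.1 (h4 y)))
    (neighborSet_comap_eq_singleton hf ((hw _ hvu').resolve_left hu'w)) (hw.comap hf)
  omega

end MinimalCounterexample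

/-- If `G` is a minimal counterexample (in `|V|+|E|`) and `G*` is obtained from `G` by
deleting all vertices of degree 1, then `G*` has minimum degree at least 2. -/
theorem minimal_cex_min_degree {n : ℕ} (G : SimpleGraph (Fin n)) (hG : IsCex G)
    (hmin : ∀ (m : ℕ) (H : SimpleGraph (Fin m)), IsCex H →
      n + G.edgeSet.ncard ≤ m + H.edgeSet.ncard) :
    ∀ v : ({v : Fin n | natDeg G v ≠ 1} : Set (Fin n)),
      2 ≤ natDeg (G.induce {v : Fin n | natDeg G v ≠ 1}) v := by
  rintro ⟨v, hv⟩
  by_contra! hlt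
  have hv0 : natDeg G v ≠ 0 := by
    obtain ⟨hconn, -, D, hD4, -, ⟨x, hx⟩, -⟩ := hG
    exact natDeg_ne_zero_of_connected hconn (x := x) (by omega) v
  obtain ⟨u, w, hu, hwu, hw⟩ := exists_pendant_of_natDeg_induce_lt_two hv hv0 hlt
  exact not_isCex_of_pendant hmin hu hwu hw hG

end SSE
end
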